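/- arXiv:2502.20239 — 5 statements merged into one kernel-verified Lean document; each statement's English description precedes it below -/
import Mathlib

section
/- The function ζ satisfies 0 ≤ ζ(x) ≤ x²/2 for all x ≥ 0, and for every ε > 0 there exists δ > 0 such that ζ(x) ≥ x²/(2 + ε) for all x ∈ (0, δ). -/
/-!
We have `ζ(0) = 0` and `ζ' = arsinh`. Since `x / √(1 + x²) = tanh (arsinh x) ≤ arsinh x ≤ x`
for `x ≥ 0`, comparing derivatives squeezes `ζ(x)` between `√(x² + 1) - 1 = x² / (√(x² + 1) + 1)`
and `x² / 2`. As `√(x² + 1) ≤ 1 + x`, this gives `ζ(x) ≥ x² / (2 + x)`, which yields both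
`ζ ≥ 0` and the bound `ζ(x) ≥ x² / (2 + ε)` for `x < ε`.
-/

noncomputable section

/-- `ζ(x) = x·arsinh(x) + 1 − √(x² + 1)`. -/
def zeta (x : ℝ) : ℝ := x * Real.arsinh x + 1 - Real.sqrt (x ^ 2 + 1)

open Real Set

theorem le_of_hasDerivAt_le_of_le {f g f' g' : ℝ → ℝ} {a x : ℝ}
    (hf : ∀ y ∈ Ici a, HasDerivAt f (f' y) y) (hg : ∀ y ∈ Ici a, HasDerivAt g (g' y) y)
    (ha : f a ≤ g a) (hfg' : ∀ y ∈ Ici a, f' y ≤ g' y) (hx : a ≤ x) : f x ≤ g x := by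
  have hmono : MonotoneOn (g - f) (Ici a) :=
    monotoneOn_of_hasDerivWithinAt_nonneg (convex_Ici a)
      (fun y hy => ((hg y hy).sub (hf y hy)).continuousAt.continuousWithinAt)
      (fun y hy => ((hg y (interior_subset hy)).sub (hf y (interior_subset hy))).hasDerivWithinAt)
      (fun y hy => sub_nonneg.mpr (hfg' y (interior_subset hy)))
  have hgf := hmono self_mem_Ici hx hx
  simp only [Pi.sub_apply] at hgf
  linarith

theorem Real.sinh_le_mul_cosh {t : ℝ} (ht : 0 ≤ t) : sinh t ≤ t * cosh t :=
  le_of_hasDerivAt_le_of_le (fun y _ => hasDerivAt_sinh y)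
    (fun y _ => (hasDerivAt_id y).mul (hasDerivAt_cosh y)) (by simp)
    (fun y (hy : 0 ≤ y) => by
      simp only [id, one_mul, le_add_iff_nonneg_right]
      exact mul_nonneg hy (sinh_nonneg_iff.mpr hy))
    ht

theorem Real.tanh_le_self {t : ℝ} (ht : 0 ≤ t) : tanh t ≤ t := by
  rw [tanh_eq_sinh_div_cosh, div_le_iff₀ (cosh_pos t)]
  exact sinh_le_mul_cosh ht

theorem Real.div_sqrt_le_arsinh {x : ℝ} (hx : 0 ≤ x) : x / √(1 + x ^ 2) ≤ arsinh x :=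
  tanh_arsinh x ▸ tanh_le_self (arsinh_nonneg_iff.mpr hx)

theorem Real.arsinh_le_self {x : ℝ} (hx : 0 ≤ x) : arsinh x ≤ x := by
  simpa using arsinh_le_arsinh.mpr (self_le_sinh_iff.mpr hx)

theorem hasDerivAt_sqrt_sq_add_one (x : ℝ) :
    HasDerivAt (fun y => √(y ^ 2 + 1)) (x / √(x ^ 2 + 1)) x := by
  have h := ((hasDerivAt_pow 2 x).add_const 1).sqrt (by positivity)
  convert h using 1
  field_simp
  ring

theorem hasDerivAt_zeta (x : ℝ) : HasDerivAt zeta (arsinh x) x := by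
  have h := (((hasDerivAt_id x).mul (hasDerivAt_arsinh x)).add_const 1).sub
    (hasDerivAt_sqrt_sq_add_one x)
  refine h.congr_deriv ?_
  rw [add_comm (x ^ 2)]
  simp [div_eq_mul_inv]

theorem zeta_le_sq_div_two {x : ℝ} (hx : 0 ≤ x) : zeta x ≤ x ^ 2 / 2 :=
  le_of_hasDerivAt_le_of_le (fun y _ => hasDerivAt_zeta y)
    (fun y _ => by simpa using (hasDerivAt_pow 2 y).div_const 2) (by simp [zeta])
    (fun y hy => arsinh_le_self hy) hx

theorem sqrt_sq_add_one_sub_one_le_zeta {x : ℝ} (hx : 0 ≤ x) : √(x ^ 2 + 1) - 1 ≤ zeta x :=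
  le_of_hasDerivAt_le_of_le (fun y _ => (hasDerivAt_sqrt_sq_add_one y).sub_const 1)
    (fun y _ => hasDerivAt_zeta y) (by simp [zeta])
    (fun y (hy : 0 ≤ y) => add_comm (y ^ 2) 1 ▸ div_sqrt_le_arsinh hy) hx

theorem sq_div_two_add_le_zeta {x : ℝ} (hx : 0 ≤ x) : x ^ 2 / (2 + x) ≤ zeta x := by
  have hsqrt : √(x ^ 2 + 1) ≤ x + 1 := (sqrt_le_left (by positivity)).mpr (by nlinarith)
  have hsq : √(x ^ 2 + 1) ^ 2 = x ^ 2 + 1 := sq_sqrt (by positivity)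
  calc x ^ 2 / (2 + x) ≤ x ^ 2 / (√(x ^ 2 + 1) + 1) :=
        div_le_div_of_nonneg_left (sq_nonneg x) (by positivity) (by linarith)
    _ = √(x ^ 2 + 1) - 1 := by
        rw [div_eq_iff (by positivity)]
        nlinarith
    _ ≤ zeta x := sqrt_sq_add_one_sub_one_le_zeta hx

theorem zeta_nonneg {x : ℝ} (hx : 0 ≤ x) : 0 ≤ zeta x :=
  (div_nonneg (sq_nonneg x) (by positivity)).trans (sq_div_two_add_le_zeta hx)

theorem stmt4 :
    (∀ x : ℝ, 0 ≤ x → 0 ≤ zeta x ∧ zeta x ≤ x ^ 2 / 2) ∧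
    ∀ ε : ℝ, 0 < ε → ∃ δ : ℝ, 0 < δ ∧ ∀ x : ℝ, 0 < x → x < δ →
      zeta x ≥ x ^ 2 / (2 + ε) := by
  refine ⟨fun x hx => ⟨zeta_nonneg hx, zeta_le_sq_div_two hx⟩,
    fun ε hε => ⟨ε, hε, fun x hx hxε => ?_⟩⟩
  calc x ^ 2 / (2 + ε) ≤ x ^ 2 / (2 + x) :=
        div_le_div_of_nonneg_left (sq_nonneg x) (by positivity) (by linarith)
    _ ≤ zeta x := sq_div_two_add_le_zeta hx.le

end
end

section
/- (Davies) Let b be a graph over (X, deg), i.e. the measure is the normalizing measure m = deg, so that Deg ≡ 1 and the Laplacian Δ is a bounded self-adjoint operator on ℓ²(X, deg). Then the heat kernel satisfies p_t(x,y) ≤ (1/√(deg(x)·deg(y))) · exp(−t·ζ(d(x,y)/t)) for all x, y ∈ X and t > 0, where d is the combinatorial graph distance (the minimal number of edges in a path joining x and y). -/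
open MeasureTheory

noncomputable section

/-- The (weighted) degree `deg(x) = Σ_y b(x,y)` of a vertex. -/
def graphDeg {X : Type*} (b : X → X → ℝ) (x : X) : ℝ := ∑' y, b x y

/-- The measure on `X` determined by a vertex weight `m`, i.e. `μ(A) = Σ_{x ∈ A} m(x)`. -/
def graphMeasure {X : Type*} [MeasurableSpace X] (m : X → ℝ) : Measure X :=
  Measure.sum (fun x => ENNReal.ofReal (m x) • Measure.dirac x)

lemma graphMeasure_singleton {X : Type*} [MeasurableSpace X] [MeasurableSingletonClass X]
    (m : X → ℝ) (x : X) : graphMeasure m {x} = ENNReal.ofReal (m x) := by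
  rw [graphMeasure, Measure.sum_apply _ (measurableSet_singleton x)]
  rw [tsum_eq_single x]
  · simp
  · intro z hz
    have : z ∉ ({x} : Set X) := by simpa using hz
    simp [Measure.dirac_apply' _ (measurableSet_singleton x), Set.indicator_of_notMem this]

lemma graphMeasure_singleton_ne_top {X : Type*} [MeasurableSpace X]
    [MeasurableSingletonClass X] (m : X → ℝ) (x : X) : graphMeasure m {x} ≠ ⊤ := by
  rw [graphMeasure_singleton]; exact ENNReal.ofReal_ne_top

/-- `δ_x`, the indicator of the vertex `x`, as an element of `ℓ²(X,m) = L²(graphMeasure m)`. -/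
def deltaVert {X : Type*} [MeasurableSpace X] [MeasurableSingletonClass X]
    (m : X → ℝ) (x : X) : Lp ℝ 2 (graphMeasure m) :=
  indicatorConstLp 2 (measurableSet_singleton x) (graphMeasure_singleton_ne_top m x) (1 : ℝ)

/-- The combinatorial graph distance: the minimal number of edges in a path joining `x` and
`y`. -/
def combDist {X : Type*} (b : X → X → ℝ) (x y : X) : ℕ :=
  sInf {n | ∃ f : ℕ → X, f 0 = x ∧ f n = y ∧ ∀ i < n, 0 < b (f i) (f (i + 1))}


/-!
Davies' method. Fix `y`, put `φ = α · d(·, y)` and conjugate the Markov operator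
`P = 1 - Δ` by the multiplication operator `N = e^{-φ}`: the twisted kernel
`b(z,w) e^{φ z - φ w}` defines a bounded operator `K` with `N K = P N`, hence
`e^{-tΔ} N = N e^{t(K - 1)}`. Since `φ` changes by at most `α` along an edge, the symmetric part
of `K` has kernel at most `cosh α · b`, so `⟨K u, u⟩ ≤ cosh α ‖u‖²` and
`‖e^{t(K - 1)}‖ ≤ e^{(cosh α - 1) t}`. Testing against `δ_x` and `δ_y` gives
`⟨δ_x, e^{-tΔ} δ_y⟩ ≤ √(deg x deg y) e^{-α d(x,y) + (cosh α - 1) t}`, and the choice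
`α = arsinh (d(x,y) / t)` turns the exponent into `-t ζ(d(x,y) / t)`.
-/

namespace WeightedGraph

lemma semiconjBy_exp {A : Type*} [NormedRing A] [NormedAlgebra ℝ A] [CompleteSpace A]
    {n a c : A} (h : SemiconjBy n a c) :
    SemiconjBy n (NormedSpace.exp a) (NormedSpace.exp c) := by
  -- `SemiconjBy.exp_right` is stated for `ℚ`-algebras only
  rw [NormedSpace.exp_eq_tsum ℝ]
  exact SemiconjBy.tsum_right n (NormedSpace.expSeries_summable' _)
    (NormedSpace.expSeries_summable' _) fun k => (h.pow_right k).smul_right _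

lemma norm_exp_smul_apply_le {E : Type*} [NormedAddCommGroup E] [InnerProductSpace ℝ E]
    [CompleteSpace E] {B : E →L[ℝ] E} {ω : ℝ} (hB : ∀ u, inner ℝ (B u) u ≤ ω * ‖u‖ ^ 2)
    (v : E) {t : ℝ} (ht : 0 ≤ t) :
    ‖NormedSpace.exp (t • B) v‖ ≤ Real.exp (ω * t) * ‖v‖ := by
  set u : ℝ → E := fun s => NormedSpace.exp (s • B) v
  have hu (s : ℝ) : HasDerivAt u (B (u s)) s := by
    simpa using (hasDerivAt_exp_smul_const' (𝕂 := ℝ) B s).clm_apply (hasDerivAt_const s v)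
  set ψ : ℝ → ℝ := fun s => Real.exp (-(2 * ω) * s) * ‖u s‖ ^ 2
  have hψ (s : ℝ) : HasDerivAt ψ (Real.exp (-(2 * ω) * s) *
      (2 * inner ℝ (u s) (B (u s)) - 2 * ω * ‖u s‖ ^ 2)) s := by
    have := (((hasDerivAt_id s).const_mul (-(2 * ω))).exp).fun_mul (hu s).norm_sq
    simp only [id, mul_one] at this
    exact this.congr_deriv (by ring)
  have hanti : Antitone ψ := antitone_of_hasDerivAt_nonpos hψ fun s => by
    have := hB (u s)
    rw [real_inner_comm] at this
    exact mul_nonpos_of_nonneg_of_nonpos (Real.exp_pos _).le (by linarith)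
  have hψt : Real.exp (-(2 * ω) * t) * ‖u t‖ ^ 2 ≤ ‖v‖ ^ 2 := by
    simpa [ψ, u] using hanti ht
  have hsq : ‖u t‖ ^ 2 ≤ (Real.exp (ω * t) * ‖v‖) ^ 2 := by
    rw [neg_mul, Real.exp_neg, inv_mul_le_iff₀ (Real.exp_pos _)] at hψt
    rwa [mul_pow, sq (Real.exp _), ← Real.exp_add, ← two_mul, ← mul_assoc]
  exact (pow_le_pow_iff_left₀ (norm_nonneg _) (by positivity) two_ne_zero).1 hsq

section WeightedL2

variable {X : Type*} [MeasurableSpace X] [MeasurableSingletonClass X] {m : X → ℝ}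

lemma ae_graphMeasure (hm : ∀ x, 0 < m x) : ae (graphMeasure m) = ⊤ := by
  simp [graphMeasure_singleton, hm]

lemma eq_of_ae_eq_graphMeasure (hm : ∀ x, 0 < m x) {f g : X → ℝ}
    (h : f =ᵐ[graphMeasure m] g) : f = g := by
  rwa [ae_graphMeasure hm, Filter.eventuallyEq_top] at h

lemma integrable_graphMeasure_iff [Countable X] (hm : ∀ x, 0 ≤ m x) {φ : X → ℝ} :
    Integrable φ (graphMeasure m) ↔ Summable fun x => m x * |φ x| := by
  simp [graphMeasure, integrable_sum_dirac_iff, ENNReal.toReal_ofReal (hm _)]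

lemma hasSum_integral_graphMeasure [Countable X] (hm : ∀ x, 0 ≤ m x) {φ : X → ℝ}
    (hφ : Integrable φ (graphMeasure m)) :
    HasSum (fun x => m x * φ x) (∫ x, φ x ∂graphMeasure m) := by
  unfold graphMeasure at *
  simpa [integral_smul_measure, ENNReal.toReal_ofReal (hm _)] using hasSum_integral_measure hφ

lemma memLp_two_of_summable [Countable X] (hm : ∀ x, 0 ≤ m x) {f : X → ℝ}
    (hf : Summable fun x => m x * f x ^ 2) : MemLp f 2 (graphMeasure m) := by
  rw [memLp_two_iff_integrable_sq (measurable_of_countable f).aestronglyMeasurable,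
    integrable_graphMeasure_iff hm]
  simpa using hf

lemma hasSum_inner [Countable X] (hm : ∀ x, 0 ≤ m x) (u v : Lp ℝ 2 (graphMeasure m)) :
    HasSum (fun x => m x * (u x * v x)) (inner ℝ u v) := by
  simpa [L2.inner_def, mul_comm] using hasSum_integral_graphMeasure hm (L2.integrable_inner u v)

lemma hasSum_norm_sq [Countable X] (hm : ∀ x, 0 ≤ m x) (u : Lp ℝ 2 (graphMeasure m)) :
    HasSum (fun x => m x * u x ^ 2) (‖u‖ ^ 2) := by
  simpa [← real_inner_self_eq_norm_sq, sq] using hasSum_inner hm u u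

lemma coeFn_deltaVert (hm : ∀ x, 0 < m x) (y : X) : ⇑(deltaVert m y) = Set.indicator {y} 1 :=
  eq_of_ae_eq_graphMeasure hm indicatorConstLp_coeFn

lemma inner_deltaVert_left (hm : ∀ x, 0 < m x) (x : X) (u : Lp ℝ 2 (graphMeasure m)) :
    inner ℝ (deltaVert m x) u = m x * u x := by
  rw [deltaVert, L2.inner_indicatorConstLp_one, integral_singleton, measureReal_def,
    graphMeasure_singleton, ENNReal.toReal_ofReal (hm x).le, smul_eq_mul]

lemma norm_deltaVert (hm : ∀ x, 0 < m x) (x : X) : ‖deltaVert m x‖ = Real.sqrt (m x) := by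
  rw [deltaVert, norm_indicatorConstLp two_ne_zero ENNReal.ofNat_ne_top, measureReal_def,
    graphMeasure_singleton, ENNReal.toReal_ofReal (hm x).le]
  simp [Real.sqrt_eq_rpow]

end WeightedL2

section Operators

def IsL2Bounded {X : Type*} (m : X → ℝ) (T : (X → ℝ) →ₗ[ℝ] X → ℝ) (C : ℝ) : Prop :=
  ∀ f : X → ℝ, Summable (fun x => m x * f x ^ 2) →
    Summable (fun x => m x * T f x ^ 2) ∧ ∑' x, m x * T f x ^ 2 ≤ C ^ 2 * ∑' x, m x * f x ^ 2

lemma isL2Bounded_mulLeft {X : Type*} {m : X → ℝ} (hm : ∀ x, 0 ≤ m x) {g : X → ℝ} {C : ℝ}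
    (hg : ∀ x, |g x| ≤ C) : IsL2Bounded m (LinearMap.mulLeft ℝ g) C := by
  intro f hf
  have hle (x : X) : m x * LinearMap.mulLeft ℝ g f x ^ 2 ≤ C ^ 2 * (m x * f x ^ 2) := by
    have hg2 : g x ^ 2 ≤ C ^ 2 := sq_le_sq' (abs_le.1 (hg x)).1 (abs_le.1 (hg x)).2
    simp only [LinearMap.mulLeft_apply, Pi.mul_apply, mul_pow]
    nlinarith [hm x, sq_nonneg (f x), mul_le_mul_of_nonneg_right hg2 (sq_nonneg (f x))]
  have hnn (x : X) : 0 ≤ m x * LinearMap.mulLeft ℝ g f x ^ 2 := by have := hm x; positivity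
  have hsum := (hf.mul_left (C ^ 2)).of_nonneg_of_le hnn hle
  exact ⟨hsum, (hsum.tsum_le_tsum hle (hf.mul_left _)).trans_eq tsum_mul_left⟩

variable {X : Type*} [Countable X] [MeasurableSpace X] [MeasurableSingletonClass X] {m : X → ℝ}

def l2OpOfLinearMap (hm : ∀ x, 0 < m x) (T : (X → ℝ) →ₗ[ℝ] X → ℝ) (C : ℝ)
    (hT : IsL2Bounded m T C) : Lp ℝ 2 (graphMeasure m) →L[ℝ] Lp ℝ 2 (graphMeasure m) :=
  have hm' : ∀ x, 0 ≤ m x := fun x => (hm x).le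
  have hmem (u : Lp ℝ 2 (graphMeasure m)) : MemLp (T u) 2 (graphMeasure m) :=
    memLp_two_of_summable hm' (hT u (hasSum_norm_sq hm' u).summable).1
  LinearMap.mkContinuous
    { toFun u := (hmem u).toLp (T u)
      map_add' u v := by
        rw [← MemLp.toLp_add]
        congr
        rw [eq_of_ae_eq_graphMeasure hm (Lp.coeFn_add u v), map_add]
      map_smul' a u := by
        rw [RingHom.id_apply, ← MemLp.toLp_const_smul]
        congr
        rw [eq_of_ae_eq_graphMeasure hm (Lp.coeFn_smul a u), map_smul] }
    |C| fun u => by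
      have hsq : ‖(hmem u).toLp (T u)‖ ^ 2 ≤ (|C| * ‖u‖) ^ 2 := by
        rw [← (hasSum_norm_sq hm' _).tsum_eq, eq_of_ae_eq_graphMeasure hm (hmem u).coeFn_toLp,
          mul_pow, sq_abs, ← (hasSum_norm_sq hm' u).tsum_eq]
        exact (hT u (hasSum_norm_sq hm' u).summable).2
      exact (pow_le_pow_iff_left₀ (norm_nonneg _) (by positivity) two_ne_zero).1 hsq

lemma coeFn_l2OpOfLinearMap (hm : ∀ x, 0 < m x) (T : (X → ℝ) →ₗ[ℝ] X → ℝ) (C : ℝ)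
    (hT : IsL2Bounded m T C) (u : Lp ℝ 2 (graphMeasure m)) :
    ⇑(l2OpOfLinearMap hm T C hT u) = T u :=
  eq_of_ae_eq_graphMeasure hm <| MemLp.coeFn_toLp <| memLp_two_of_summable (fun x => (hm x).le)
    (hT u (hasSum_norm_sq (fun x => (hm x).le) u).summable).1

def mulOp (hm : ∀ x, 0 < m x) {g : X → ℝ} {C : ℝ} (hg : ∀ x, |g x| ≤ C) :
    Lp ℝ 2 (graphMeasure m) →L[ℝ] Lp ℝ 2 (graphMeasure m) :=
  l2OpOfLinearMap hm (LinearMap.mulLeft ℝ g) C (isL2Bounded_mulLeft (fun x => (hm x).le) hg)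

lemma coeFn_mulOp (hm : ∀ x, 0 < m x) {g : X → ℝ} {C : ℝ} (hg : ∀ x, |g x| ≤ C)
    (u : Lp ℝ 2 (graphMeasure m)) : ⇑(mulOp hm hg u) = fun x => g x * u x :=
  coeFn_l2OpOfLinearMap _ _ _ _ u

end Operators

structure IsLocallyFiniteGraph {X : Type*} (b : X → X → ℝ) : Prop where
  nonneg : ∀ x y, 0 ≤ b x y
  symm : ∀ x y, b x y = b y x
  finite_support : ∀ x, (Function.support (b x)).Finite
  graphDeg_pos : ∀ x, 0 < graphDeg b x

namespace IsLocallyFiniteGraph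

variable {X : Type*} {b : X → X → ℝ} (hG : IsLocallyFiniteGraph b)
include hG

def nbhd (z : X) : Finset X := (hG.finite_support z).toFinset

lemma eq_zero_of_notMem_nbhd {z w : X} (hw : w ∉ hG.nbhd z) : b z w = 0 := by
  simpa [nbhd] using hw

lemma hasSum_mul_of_eq_zero {z : X} {c : X → ℝ} (hc : ∀ w, b z w = 0 → c w = 0) (f : X → ℝ) :
    HasSum (fun w => c w * f w) (∑ w ∈ hG.nbhd z, c w * f w) :=
  hasSum_sum_of_ne_finset_zero fun w hw => by rw [hc w (hG.eq_zero_of_notMem_nbhd hw), zero_mul]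

lemma graphDeg_eq_sum (z : X) : graphDeg b z = ∑ w ∈ hG.nbhd z, b z w := by
  simpa [graphDeg] using (hG.hasSum_mul_of_eq_zero (c := b z) (fun _ => id) 1).tsum_eq

lemma hasSum_edge_sq {f : X → ℝ} {s : ℝ} (hf : HasSum (fun z => graphDeg b z * f z ^ 2) s) :
    HasSum (fun p : X × X => b p.1 p.2 * f p.1 ^ 2) s := by
  have hfib (z : X) : HasSum (fun w => b z w * f z ^ 2) (graphDeg b z * f z ^ 2) := by
    rw [hG.graphDeg_eq_sum, Finset.sum_mul]
    exact hG.hasSum_mul_of_eq_zero (fun _ => id) (fun _ => f z ^ 2)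
  have hsum : Summable fun p : X × X => b p.1 p.2 * f p.1 ^ 2 :=
    (summable_prod_of_nonneg fun p => mul_nonneg (hG.nonneg _ _) (sq_nonneg _)).2
      ⟨fun z => (hfib z).summable, by simpa only [(hfib _).tsum_eq] using hf.summable⟩
  convert hsum.hasSum
  exact hf.unique (hsum.hasSum.prod_fiberwise hfib)

lemma hasSum_edge_sq_swap {f : X → ℝ} {s : ℝ}
    (hf : HasSum (fun z => graphDeg b z * f z ^ 2) s) :
    HasSum (fun p : X × X => b p.1 p.2 * f p.2 ^ 2) s := by
  rw [← (Equiv.prodComm X X).hasSum_iff]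
  simpa [Function.comp_def, hG.symm] using hG.hasSum_edge_sq hf

def kernelMap (c : X → X → ℝ) : (X → ℝ) →ₗ[ℝ] X → ℝ where
  toFun f z := (graphDeg b z)⁻¹ * ∑ w ∈ hG.nbhd z, c z w * f w
  map_add' f g := by ext z; simp [mul_add, Finset.sum_add_distrib]
  map_smul' a f := by
    ext z
    simp only [Pi.smul_apply, smul_eq_mul, RingHom.id_apply, Finset.mul_sum]
    exact Finset.sum_congr rfl fun w _ => by ring

lemma kernelMap_apply (c : X → X → ℝ) (f : X → ℝ) (z : X) :
    hG.kernelMap c f z = (graphDeg b z)⁻¹ * ∑ w ∈ hG.nbhd z, c z w * f w := rfl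

lemma graphDeg_mul_sq_kernelMap_le {c : X → X → ℝ} {C : ℝ} (hc : ∀ z w, |c z w| ≤ C * b z w)
    (f : X → ℝ) (z : X) :
    graphDeg b z * hG.kernelMap c f z ^ 2 ≤ C ^ 2 * ∑ w ∈ hG.nbhd z, b z w * f w ^ 2 := by
  have hCb (w : X) : 0 ≤ C * b z w := (abs_nonneg _).trans (hc z w)
  have hCS : (∑ w ∈ hG.nbhd z, c z w * f w) ^ 2 ≤
      (∑ w ∈ hG.nbhd z, C * b z w) * ∑ w ∈ hG.nbhd z, C * b z w * f w ^ 2 := by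
    refine Finset.sum_sq_le_sum_mul_sum_of_sq_le_mul _ (fun w _ => hCb w)
      (fun w _ => mul_nonneg (hCb w) (sq_nonneg _)) fun w _ => ?_
    have := pow_le_pow_left₀ (abs_nonneg _) (hc z w) 2
    rw [sq_abs] at this
    nlinarith [sq_nonneg (f w)]
  simp only [mul_assoc, ← Finset.mul_sum, ← hG.graphDeg_eq_sum] at hCS
  have hd := hG.graphDeg_pos z
  calc graphDeg b z * hG.kernelMap c f z ^ 2
      = (∑ w ∈ hG.nbhd z, c z w * f w) ^ 2 / graphDeg b z := by
        rw [kernelMap_apply]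
        field_simp
    _ ≤ C * (graphDeg b z * (C * ∑ w ∈ hG.nbhd z, b z w * f w ^ 2)) / graphDeg b z := by
        gcongr
    _ = C ^ 2 * ∑ w ∈ hG.nbhd z, b z w * f w ^ 2 := by
        field_simp

lemma isL2Bounded_kernelMap {c : X → X → ℝ} {C : ℝ} (hc : ∀ z w, |c z w| ≤ C * b z w) :
    IsL2Bounded (graphDeg b) (hG.kernelMap c) C := by
  intro f hf
  have hrows : HasSum (fun z => ∑ w ∈ hG.nbhd z, b z w * f w ^ 2)
      (∑' z, graphDeg b z * f z ^ 2) :=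
    (hG.hasSum_edge_sq_swap hf.hasSum).prod_fiberwise fun z =>
      hG.hasSum_mul_of_eq_zero (fun _ => id) _
  have hnn (z : X) : 0 ≤ graphDeg b z * hG.kernelMap c f z ^ 2 :=
    mul_nonneg (hG.graphDeg_pos z).le (sq_nonneg _)
  have hle := hG.graphDeg_mul_sq_kernelMap_le hc f
  have hsum := (hrows.summable.mul_left (C ^ 2)).of_nonneg_of_le hnn hle
  exact ⟨hsum, (hsum.tsum_le_tsum hle (hrows.summable.mul_left _)).trans_eq
    (by rw [tsum_mul_left, hrows.tsum_eq])⟩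

lemma abs_mul_exp_sub_le {φ : X → ℝ} {a : ℝ} (hφ : ∀ z w, 0 < b z w → |φ z - φ w| ≤ a)
    (z w : X) : |b z w * Real.exp (φ z - φ w)| ≤ Real.exp a * b z w := by
  rcases (hG.nonneg z w).eq_or_lt with hzw | hzw
  · simp [← hzw]
  · rw [abs_of_nonneg (by positivity), mul_comm]
    exact mul_le_mul_of_nonneg_right (Real.exp_le_exp.2 (le_of_abs_le (hφ z w hzw))) hzw.le

lemma abs_mul_exp_sub_add_le {φ : X → ℝ} {a : ℝ} (hφ : ∀ z w, 0 < b z w → |φ z - φ w| ≤ a)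
    (z w : X) :
    |b z w * Real.exp (φ z - φ w) + b w z * Real.exp (φ w - φ z)| ≤ 2 * Real.cosh a * b z w := by
  rcases (hG.nonneg z w).eq_or_lt with hzw | hzw
  · simp [← hzw, hG.symm w z]
  · have hsum : b z w * Real.exp (φ z - φ w) + b w z * Real.exp (φ w - φ z) =
        2 * Real.cosh (φ z - φ w) * b z w := by
      rw [hG.symm w z, Real.cosh_eq, neg_sub]
      ring
    have hcosh : Real.cosh (φ z - φ w) ≤ Real.cosh a :=
      Real.cosh_le_cosh.2 ((hφ z w hzw).trans (le_abs_self a))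
    rw [hsum, abs_of_nonneg (by positivity)]
    gcongr

lemma exp_neg_mul_kernelMap_twist (φ : X → ℝ) (f : X → ℝ) (z : X) :
    Real.exp (-φ z) * hG.kernelMap (fun z w => b z w * Real.exp (φ z - φ w)) f z =
      hG.kernelMap b (fun w => Real.exp (-φ w) * f w) z := by
  simp only [kernelMap_apply, Finset.mul_sum, mul_left_comm (Real.exp (-φ z))]
  refine Finset.sum_congr rfl fun w _ => ?_
  rw [show -φ w = -φ z + (φ z - φ w) by ring, Real.exp_add]
  ring

variable [MeasurableSpace X] [MeasurableSingletonClass X]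

lemma coeFn_one_sub_laplacian
    {Δ : Lp ℝ 2 (graphMeasure (graphDeg b)) →L[ℝ] Lp ℝ 2 (graphMeasure (graphDeg b))}
    (hΔ : ∀ u : Lp ℝ 2 (graphMeasure (graphDeg b)), ∀ x : X,
      (Δ u : X → ℝ) x = (graphDeg b x)⁻¹ * ∑' y, b x y * ((u : X → ℝ) x - (u : X → ℝ) y))
    (u : Lp ℝ 2 (graphMeasure (graphDeg b))) : ⇑((1 - Δ) u) = hG.kernelMap b u := by
  ext z
  rw [sub_apply, one_apply_eq_self,
    eq_of_ae_eq_graphMeasure hG.graphDeg_pos (Lp.coeFn_sub _ _), Pi.sub_apply, hΔ,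
    (hG.hasSum_mul_of_eq_zero (fun _ => id) fun w => u z - u w).tsum_eq, kernelMap_apply]
  have hd := (hG.graphDeg_pos z).ne'
  simp only [mul_sub, Finset.sum_sub_distrib, ← Finset.sum_mul, ← hG.graphDeg_eq_sum]
  field_simp
  ring

variable [Countable X]

def kernelOp {c : X → X → ℝ} {C : ℝ} (hc : ∀ z w, |c z w| ≤ C * b z w) :
    Lp ℝ 2 (graphMeasure (graphDeg b)) →L[ℝ] Lp ℝ 2 (graphMeasure (graphDeg b)) :=
  l2OpOfLinearMap hG.graphDeg_pos (hG.kernelMap c) C (hG.isL2Bounded_kernelMap hc)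

lemma coeFn_kernelOp {c : X → X → ℝ} {C : ℝ} (hc : ∀ z w, |c z w| ≤ C * b z w)
    (u : Lp ℝ 2 (graphMeasure (graphDeg b))) : ⇑(hG.kernelOp hc u) = hG.kernelMap c u :=
  coeFn_l2OpOfLinearMap _ _ _ _ u

lemma inner_kernelOp_self_le {c : X → X → ℝ} {C D : ℝ} (hc : ∀ z w, |c z w| ≤ C * b z w)
    (hcD : ∀ z w, |c z w + c w z| ≤ 2 * D * b z w) (u : Lp ℝ 2 (graphMeasure (graphDeg b))) :
    inner ℝ (hG.kernelOp hc u) u ≤ D * ‖u‖ ^ 2 := by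
  have hdeg (z : X) : 0 ≤ graphDeg b z := (hG.graphDeg_pos z).le
  have hu := hasSum_norm_sq hdeg u
  have hsq := (hG.hasSum_edge_sq hu).add (hG.hasSum_edge_sq_swap hu)
  set G : X × X → ℝ := fun p => c p.1 p.2 * (u p.1 * u p.2)
  have hamgm (p : X × X) : 2 * |u p.1 * u p.2| ≤ u p.1 ^ 2 + u p.2 ^ 2 := by
    simpa [abs_mul, mul_assoc] using two_mul_le_add_sq |u p.1| |u p.2|
  have hG_le (p : X × X) : |G p| ≤ |C| * (b p.1 p.2 * u p.1 ^ 2 + b p.1 p.2 * u p.2 ^ 2) := by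
    have hCb : |c p.1 p.2| ≤ |C| * b p.1 p.2 :=
      (hc _ _).trans (mul_le_mul_of_nonneg_right (le_abs_self C) (hG.nonneg _ _))
    have := mul_le_mul hCb (hamgm p) (by positivity) ((abs_nonneg _).trans hCb)
    rw [abs_mul]
    nlinarith [abs_nonneg (u p.1 * u p.2), abs_nonneg (c p.1 p.2)]
  have hGsum : Summable G := (hsq.summable.mul_left |C|).of_norm_bounded hG_le
  have hfib (z : X) :
      HasSum (fun w => G (z, w)) (graphDeg b z * (hG.kernelMap c u z * u z)) := by
    have hc0 (w : X) (hw : b z w = 0) : c z w = 0 := abs_nonpos_iff.1 (by simpa [hw] using hc z w)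
    convert hG.hasSum_mul_of_eq_zero hc0 (fun w => u z * u w) using 1
    rw [kernelMap_apply, ← mul_assoc, ← mul_assoc, mul_inv_cancel₀ (hG.graphDeg_pos z).ne',
      one_mul, Finset.sum_mul]
    exact Finset.sum_congr rfl fun w _ => by ring
  have hGinner : HasSum G (inner ℝ (hG.kernelOp hc u) u) := by
    convert hGsum.hasSum
    refine (hasSum_inner hdeg _ u).unique ?_
    simpa only [coeFn_kernelOp] using hGsum.hasSum.prod_fiberwise hfib
  -- summing `G` over the swapped pairs as well replaces `c` by its symmetrisation
  have hGswap : HasSum (G ∘ Prod.swap) (inner ℝ (hG.kernelOp hc u) u) :=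
    (Equiv.prodComm X X).hasSum_iff.2 hGinner
  have hpt (p : X × X) : G p + (G ∘ Prod.swap) p ≤
      D * (b p.1 p.2 * u p.1 ^ 2 + b p.1 p.2 * u p.2 ^ 2) := by
    have hDb : 0 ≤ D * b p.1 p.2 := by linarith [abs_nonneg (c p.1 p.2 + c p.2 p.1), hcD p.1 p.2]
    calc G p + (G ∘ Prod.swap) p = (c p.1 p.2 + c p.2 p.1) * (u p.1 * u p.2) := by
          simp only [G, Function.comp_apply, Prod.fst_swap, Prod.snd_swap]; ring
      _ ≤ |c p.1 p.2 + c p.2 p.1| * |u p.1 * u p.2| := (le_abs_self _).trans (abs_mul _ _).le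
      _ ≤ 2 * D * b p.1 p.2 * |u p.1 * u p.2| :=
          mul_le_mul_of_nonneg_right (hcD _ _) (abs_nonneg _)
      _ ≤ D * (b p.1 p.2 * u p.1 ^ 2 + b p.1 p.2 * u p.2 ^ 2) := by
          nlinarith [mul_le_mul_of_nonneg_left (hamgm p) hDb]
  linarith [hasSum_le hpt (hGinner.add hGswap) (hsq.mul_left D)]

theorem inner_deltaVert_exp_le
    {Δ : Lp ℝ 2 (graphMeasure (graphDeg b)) →L[ℝ] Lp ℝ 2 (graphMeasure (graphDeg b))}
    (hΔ : ∀ u : Lp ℝ 2 (graphMeasure (graphDeg b)), ∀ x : X,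
      (Δ u : X → ℝ) x = (graphDeg b x)⁻¹ * ∑' y, b x y * ((u : X → ℝ) x - (u : X → ℝ) y))
    {φ : X → ℝ} (hφ0 : ∀ z, 0 ≤ φ z) {a : ℝ} (hφ : ∀ z w, 0 < b z w → |φ z - φ w| ≤ a)
    (x y : X) {t : ℝ} (ht : 0 ≤ t) :
    inner ℝ (deltaVert (graphDeg b) x) (NormedSpace.exp (-(t • Δ)) (deltaVert (graphDeg b) y)) ≤
      Real.sqrt (graphDeg b x * graphDeg b y) *
        Real.exp (φ y - φ x + (Real.cosh a - 1) * t) := by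
  set K := hG.kernelOp (hG.abs_mul_exp_sub_le hφ)
  have hg (z : X) : |Real.exp (-φ z)| ≤ 1 := by
    rw [abs_of_pos (Real.exp_pos _), Real.exp_le_one_iff, neg_nonpos]
    exact hφ0 z
  set N := mulOp hG.graphDeg_pos hg
  have hNK : N * K = (1 - Δ) * N := by
    ext1 u
    refine Lp.ext (Filter.EventuallyEq.of_eq (funext fun z => ?_))
    rw [mul_apply_eq_comp, mul_apply_eq_comp, coeFn_one_sub_laplacian hG hΔ, coeFn_mulOp,
      coeFn_mulOp, coeFn_kernelOp]
    exact hG.exp_neg_mul_kernelMap_twist φ u z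
  have hexp : N * NormedSpace.exp (t • (K - 1)) = NormedSpace.exp (-(t • Δ)) * N := by
    refine semiconjBy_exp ?_
    show N * (t • (K - 1)) = -(t • Δ) * N
    rw [mul_smul_comm, mul_sub, hNK, mul_one, sub_mul, one_mul, sub_sub_cancel_left, neg_mul,
      smul_mul_assoc, smul_neg]
  have hδy : deltaVert (graphDeg b) y = Real.exp (φ y) • N (deltaVert (graphDeg b) y) := by
    refine Lp.ext (Filter.EventuallyEq.of_eq (funext fun z => ?_))
    rw [eq_of_ae_eq_graphMeasure hG.graphDeg_pos (Lp.coeFn_smul _ _), Pi.smul_apply, coeFn_mulOp,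
      coeFn_deltaVert hG.graphDeg_pos]
    rcases eq_or_ne z y with rfl | hzy
    · simp [← Real.exp_add]
    · simp [hzy]
  have hK (u : Lp ℝ 2 (graphMeasure (graphDeg b))) :
      inner ℝ ((K - 1) u) u ≤ (Real.cosh a - 1) * ‖u‖ ^ 2 := by
    have := hG.inner_kernelOp_self_le (hG.abs_mul_exp_sub_le hφ) (hG.abs_mul_exp_sub_add_le hφ) u
    rw [sub_apply, one_apply_eq_self, inner_sub_left, real_inner_self_eq_norm_sq]
    linarith
  have hnorm := norm_exp_smul_apply_le hK (deltaVert (graphDeg b) y) ht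
  calc inner ℝ (deltaVert (graphDeg b) x) (NormedSpace.exp (-(t • Δ)) (deltaVert (graphDeg b) y))
      = Real.exp (φ y) * Real.exp (-φ x) * inner ℝ (deltaVert (graphDeg b) x)
          (NormedSpace.exp (t • (K - 1)) (deltaVert (graphDeg b) y)) := by
        conv_lhs => rw [hδy]
        rw [map_smul, inner_smul_right, ← mul_apply_eq_comp, ← hexp, mul_apply_eq_comp,
          inner_deltaVert_left hG.graphDeg_pos, inner_deltaVert_left hG.graphDeg_pos, coeFn_mulOp]
        ring
    _ ≤ Real.exp (φ y) * Real.exp (-φ x) * (‖deltaVert (graphDeg b) x‖ *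
          (Real.exp ((Real.cosh a - 1) * t) * ‖deltaVert (graphDeg b) y‖)) := by
        gcongr
        exact (real_inner_le_norm _ _).trans (by gcongr)
    _ = _ := by
        rw [norm_deltaVert hG.graphDeg_pos, norm_deltaVert hG.graphDeg_pos,
          Real.sqrt_mul (hG.graphDeg_pos x).le, Real.exp_add, Real.exp_sub, Real.exp_neg]
        ring

end IsLocallyFiniteGraph

section CombDist

variable {X : Type*} {b : X → X → ℝ}

def walkLengths (b : X → X → ℝ) (x y : X) : Set ℕ :=
  {n | ∃ f : ℕ → X, f 0 = x ∧ f n = y ∧ ∀ i < n, 0 < b (f i) (f (i + 1))}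

lemma zero_mem_walkLengths (x : X) : 0 ∈ walkLengths b x x :=
  ⟨fun _ => x, rfl, rfl, by simp⟩

lemma succ_mem_walkLengths {z w y : X} (hzw : 0 < b z w) {n : ℕ} (hn : n ∈ walkLengths b w y) :
    n + 1 ∈ walkLengths b z y := by
  obtain ⟨f, hf0, hfn, hf⟩ := hn
  refine ⟨fun | 0 => z | i + 1 => f i, rfl, hfn, fun i hi => ?_⟩
  cases i with
  | zero => simpa [hf0] using hzw
  | succ i => exact hf i (by omega)

lemma walkLengths_nonempty {x y : X} (h : Relation.ReflTransGen (fun u v => 0 < b u v) x y) :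
    (walkLengths b x y).Nonempty := by
  induction h using Relation.ReflTransGen.head_induction_on with
  | refl => exact ⟨0, zero_mem_walkLengths y⟩
  | head hzw _ ih => exact ⟨_, succ_mem_walkLengths hzw ih.some_mem⟩

lemma combDist_self (x : X) : combDist b x x = 0 :=
  Nat.sInf_eq_zero.2 (Or.inl (zero_mem_walkLengths x))

lemma combDist_le_succ {z w y : X} (hzw : 0 < b z w)
    (h : Relation.ReflTransGen (fun u v => 0 < b u v) w y) :
    combDist b z y ≤ combDist b w y + 1 :=
  Nat.sInf_le (succ_mem_walkLengths hzw (Nat.sInf_mem (walkLengths_nonempty h)))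

lemma abs_combDist_sub_le (hb_symm : ∀ x y, b x y = b y x)
    (hconn : ∀ x y, Relation.ReflTransGen (fun u v => 0 < b u v) x y) {z w : X} (hzw : 0 < b z w)
    (y : X) : |(combDist b z y : ℝ) - combDist b w y| ≤ 1 := by
  have h₁ : (combDist b z y : ℝ) ≤ combDist b w y + 1 := mod_cast combDist_le_succ hzw (hconn w y)
  have h₂ : (combDist b w y : ℝ) ≤ combDist b z y + 1 :=
    mod_cast combDist_le_succ (hb_symm z w ▸ hzw) (hconn z y)
  exact abs_sub_le_iff.2 ⟨by linarith, by linarith⟩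

end CombDist

-- `ζ` is the Legendre transform of `cosh - 1`: the supremum of `α s - (cosh α - 1)` is attained
-- at `α = arsinh s`.
lemma zeta_eq (s : ℝ) : zeta s = s * Real.arsinh s - (Real.cosh (Real.arsinh s) - 1) := by
  rw [zeta, Real.cosh_arsinh, add_comm (s ^ 2)]
  ring

end WeightedGraph

open WeightedGraph

theorem stmt5_general {X : Type*} [Countable X] [MeasurableSpace X] [MeasurableSingletonClass X]
    (b : X → X → ℝ)
    (hb_nonneg : ∀ x y, 0 ≤ b x y) (hb_symm : ∀ x y, b x y = b y x)
    (hlf : ∀ x, (Function.support (b x)).Finite)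
    (hdeg_pos : ∀ x, 0 < graphDeg b x)
    (hconn : ∀ x y, Relation.ReflTransGen (fun u v => 0 < b u v) x y)
    -- the Laplacian, a bounded self-adjoint operator on `ℓ²(X, deg)`
    (Δ : Lp ℝ 2 (graphMeasure (graphDeg b)) →L[ℝ] Lp ℝ 2 (graphMeasure (graphDeg b)))
    (hΔ : ∀ u : Lp ℝ 2 (graphMeasure (graphDeg b)), ∀ x : X,
      (Δ u : X → ℝ) x = (graphDeg b x)⁻¹ * ∑' y, b x y * ((u : X → ℝ) x - (u : X → ℝ) y))
    -- the heat kernel `p_t(x,y) = ⟨δ_x, e^{−tΔ} δ_y⟩ / (deg(x)·deg(y))`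
    (p : ℝ → X → X → ℝ)
    (hp : ∀ t x y, p t x y =
      (inner ℝ (deltaVert (graphDeg b) x)
        (NormedSpace.exp (-(t • Δ)) (deltaVert (graphDeg b) y)) : ℝ) /
        (graphDeg b x * graphDeg b y)) :
    ∀ (x y : X) (t : ℝ), 0 < t →
      p t x y ≤ (Real.sqrt (graphDeg b x * graphDeg b y))⁻¹ *
        Real.exp (-(t * zeta ((combDist b x y : ℝ) / t))) := by
  intro x y t ht
  have hG : IsLocallyFiniteGraph b := ⟨hb_nonneg, hb_symm, hlf, hdeg_pos⟩
  set d : ℝ := (combDist b x y : ℝ)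
  set α := Real.arsinh (d / t)
  have hα : 0 ≤ α := Real.arsinh_nonneg_iff.2 (by positivity)
  have hφ (z w : X) (hzw : 0 < b z w) :
      |α * combDist b z y - α * combDist b w y| ≤ α := by
    rw [← mul_sub, abs_mul, abs_of_nonneg hα]
    exact mul_le_of_le_one_right hα (abs_combDist_sub_le hb_symm hconn hzw y)
  have hdavies := hG.inner_deltaVert_exp_le hΔ (fun z => by positivity) hφ x y ht.le
  have hexponent : α * (combDist b y y : ℝ) - α * d + (Real.cosh α - 1) * t =
      -(t * zeta (d / t)) := by
    rw [combDist_self, zeta_eq]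
    field_simp
    ring
  rw [hexponent] at hdavies
  have hdeg : 0 < graphDeg b x * graphDeg b y := mul_pos (hdeg_pos x) (hdeg_pos y)
  rw [hp, div_le_iff₀ hdeg]
  refine hdavies.trans_eq ?_
  have := Real.sqrt_pos.2 hdeg
  field_simp
  exact Real.sq_sqrt hdeg.le

theorem stmt5 {X : Type*} [Countable X] [MeasurableSpace X] [MeasurableSingletonClass X]
    (b : X → X → ℝ)
    (hb_nonneg : ∀ x y, 0 ≤ b x y) (hb_symm : ∀ x y, b x y = b y x)
    (hb_loop : ∀ x, b x x = 0)
    (hlf : ∀ x, (Function.support (b x)).Finite)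
    (hdeg_pos : ∀ x, 0 < graphDeg b x)
    (hconn : ∀ x y, Relation.ReflTransGen (fun u v => 0 < b u v) x y)
    -- the Laplacian, a bounded self-adjoint operator on `ℓ²(X, deg)`
    (Δ : Lp ℝ 2 (graphMeasure (graphDeg b)) →L[ℝ] Lp ℝ 2 (graphMeasure (graphDeg b)))
    (hΔ : ∀ u : Lp ℝ 2 (graphMeasure (graphDeg b)), ∀ x : X,
      (Δ u : X → ℝ) x = (graphDeg b x)⁻¹ * ∑' y, b x y * ((u : X → ℝ) x - (u : X → ℝ) y))
    (hΔ_sa : IsSelfAdjoint Δ)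
    -- the heat kernel `p_t(x,y) = ⟨δ_x, e^{−tΔ} δ_y⟩ / (deg(x)·deg(y))`
    (p : ℝ → X → X → ℝ)
    (hp : ∀ t x y, p t x y =
      (inner ℝ (deltaVert (graphDeg b) x)
        (NormedSpace.exp (-(t • Δ)) (deltaVert (graphDeg b) y)) : ℝ) /
        (graphDeg b x * graphDeg b y)) :
    ∀ (x y : X) (t : ℝ), 0 < t →
      p t x y ≤ (Real.sqrt (graphDeg b x * graphDeg b y))⁻¹ *
        Real.exp (-(t * zeta ((combDist b x y : ℝ) / t))) :=
  stmt5_general b hb_nonneg hb_symm hlf hdeg_pos hconn Δ hΔ p hp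
end
end

section
/- Let b be a locally finite graph over (X,m). The Laplacian Δ is bounded on ℓ²(X,m) if and only if the weighted vertex degree is bounded; precisely: there exists C ≥ 0 such that Σ_x m(x)·(Δf(x))² ≤ C · Σ_x m(x)·f(x)² for every finitely supported f : X → ℝ, if and only if sup_x Deg(x) < ∞. -/
noncomputable section

/-- The graph Laplacian `Δf(x) = (1/m(x)) Σ_y b(x,y)(f(x) − f(y))`. -/
def graphLap {X : Type*} (b : X → X → ℝ) (m : X → ℝ) (f : X → ℝ) (x : X) : ℝ :=
  (m x)⁻¹ * ∑' y, b x y * (f x - f y)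

theorem stmt6 {X : Type*} [Countable X]
    (b : X → X → ℝ) (m : X → ℝ)
    (hb_nonneg : ∀ x y, 0 ≤ b x y) (hb_symm : ∀ x y, b x y = b y x)
    (hb_loop : ∀ x, b x x = 0)
    (hlf : ∀ x, (Function.support (b x)).Finite)
    (hm_pos : ∀ x, 0 < m x) :
    (∃ C : ℝ, 0 ≤ C ∧ ∀ f : X → ℝ, (Function.support f).Finite →
        ∑' x, ENNReal.ofReal (m x * graphLap b m f x ^ 2) ≤
          ENNReal.ofReal C * ∑' x, ENNReal.ofReal (m x * f x ^ 2)) ↔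
      ∃ D : ℝ, ∀ x, graphDeg b x / m x ≤ D := by
  classical
  have hdeg_nonneg : ∀ x, 0 ≤ graphDeg b x := fun x => tsum_nonneg (hb_nonneg x)
  have hsumm : ∀ x, Summable (b x) := fun x =>
    summable_of_ne_finset_zero (s := (hlf x).toFinset)
      (fun y hy => by
        by_contra h
        exact hy ((hlf x).mem_toFinset.mpr h))
  have hdeg_sum : ∀ x, graphDeg b x = ∑ y ∈ (hlf x).toFinset, b x y := fun x =>
    tsum_eq_sum (fun y hy => by
      by_contra h
      exact hy ((hlf x).mem_toFinset.mpr h))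
  constructor
  · rintro ⟨C, hC, hbound⟩
    refine ⟨Real.sqrt C, fun x => ?_⟩
    set f : X → ℝ := fun y => if y = x then 1 else 0 with hf
    have hfin : (Function.support f).Finite := by
      apply Set.Finite.subset (Set.finite_singleton x)
      intro y hy
      simp only [Function.mem_support, hf] at hy
      by_contra h
      simp only [Set.mem_singleton_iff] at h
      exact hy (by simp [h])
    have key := hbound f hfin
    have hRHS : ∑' y, ENNReal.ofReal (m y * f y ^ 2) = ENNReal.ofReal (m x) := by
      rw [tsum_eq_single x (fun y hy => by simp [hf, hy])]
      simp [hf]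
    have hlap : graphLap b m f x = graphDeg b x / m x := by
      unfold graphLap graphDeg
      have h1 : ∀ y, b x y * (f x - f y) = b x y := by
        intro y
        by_cases hy : y = x
        · subst hy; simp [hb_loop]
        · simp [hf, hy]
      simp only [h1]
      rw [div_eq_inv_mul]
    have hle : ENNReal.ofReal (m x * graphLap b m f x ^ 2) ≤ ENNReal.ofReal (C * m x) := by
      calc ENNReal.ofReal (m x * graphLap b m f x ^ 2)
          ≤ ∑' y, ENNReal.ofReal (m y * graphLap b m f y ^ 2) := ENNReal.le_tsum x
        _ ≤ ENNReal.ofReal C * ENNReal.ofReal (m x) := by rw [← hRHS]; exact key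
        _ = ENNReal.ofReal (C * m x) := (ENNReal.ofReal_mul hC).symm
    have hre : m x * graphLap b m f x ^ 2 ≤ C * m x :=
      (ENNReal.ofReal_le_ofReal_iff (mul_nonneg hC (hm_pos x).le)).mp hle
    rw [hlap] at hre
    have hsq : (graphDeg b x / m x) ^ 2 ≤ C := by nlinarith [hm_pos x]
    have hpos : 0 ≤ graphDeg b x / m x := div_nonneg (hdeg_nonneg x) (hm_pos x).le
    calc graphDeg b x / m x = Real.sqrt ((graphDeg b x / m x) ^ 2) :=
          (Real.sqrt_sq hpos).symm
      _ ≤ Real.sqrt C := Real.sqrt_le_sqrt hsq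
  · rintro ⟨D, hD⟩
    set D' := max D 0 with hD'def
    have hD'0 : 0 ≤ D' := le_max_right _ _
    have hDeg : ∀ x, graphDeg b x ≤ D' * m x := by
      intro x
      have := (hD x).trans (le_max_left D 0)
      rw [div_le_iff₀ (hm_pos x)] at this
      linarith
    refine ⟨4 * D' ^ 2, by positivity, fun f hf => ?_⟩
    set s := hf.toFinset with hs
    have hf0 : ∀ x, x ∉ s → f x = 0 := by
      intro x hx
      by_contra h
      exact hx (hf.mem_toFinset.mpr h)
    set T : Finset X := s ∪ s.biUnion (fun y => (hlf y).toFinset) with hT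
    set U : Finset X := T ∪ T.biUnion (fun x => (hlf x).toFinset) with hU
    have hsT : s ⊆ T := Finset.subset_union_left
    have hTU : T ⊆ U := Finset.subset_union_left
    have hNU : ∀ x ∈ T, (hlf x).toFinset ⊆ U := by
      intro x hx y hy
      exact Finset.mem_union_right _ (Finset.mem_biUnion.mpr ⟨x, hx, hy⟩)
    have hlapsum : ∀ x, graphLap b m f x
        = (m x)⁻¹ * ∑ y ∈ (hlf x).toFinset, b x y * (f x - f y) := by
      intro x
      unfold graphLap
      congr 1
      refine tsum_eq_sum (fun y hy => ?_)
      have hb0 : b x y = 0 := by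
        by_contra h
        exact hy ((hlf x).mem_toFinset.mpr h)
      simp [hb0]
    have hlap0 : ∀ x, x ∉ T → graphLap b m f x = 0 := by
      intro x hx
      have hxs : x ∉ s := fun h => hx (hsT h)
      have hfx : f x = 0 := hf0 x hxs
      rw [hlapsum x]
      have hz : ∀ y ∈ (hlf x).toFinset, b x y * (f x - f y) = 0 := by
        intro y hy
        have hfy : f y = 0 := by
          by_contra h
          have hys : y ∈ s := hf.mem_toFinset.mpr h
          have hbxy : b x y ≠ 0 := by
            have := (hlf x).mem_toFinset.mp hy
            simpa [Function.mem_support] using this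
          have hbyx : b y x ≠ 0 := by rwa [hb_symm y x]
          exact hx (Finset.mem_union_right _ (Finset.mem_biUnion.mpr
            ⟨y, hys, (hlf y).mem_toFinset.mpr (by simpa [Function.mem_support] using hbyx)⟩))
        simp [hfx, hfy]
      rw [Finset.sum_eq_zero hz, mul_zero]
    -- rewrite both tsums as finite sums over T
    have hL : ∑' x, ENNReal.ofReal (m x * graphLap b m f x ^ 2)
        = ENNReal.ofReal (∑ x ∈ T, m x * graphLap b m f x ^ 2) := by
      rw [tsum_eq_sum (s := T) (fun x hx => by rw [hlap0 x hx]; simp),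
        ENNReal.ofReal_sum_of_nonneg
          (fun i _ => mul_nonneg (hm_pos i).le (sq_nonneg _))]
    have hR : ∑' x, ENNReal.ofReal (m x * f x ^ 2)
        = ENNReal.ofReal (∑ x ∈ T, m x * f x ^ 2) := by
      rw [tsum_eq_sum (s := T) (fun x hx => by
          rw [hf0 x (fun h => hx (hsT h))]; simp),
        ENNReal.ofReal_sum_of_nonneg
          (fun i _ => mul_nonneg (hm_pos i).le (sq_nonneg _))]
    rw [hL, hR, ← ENNReal.ofReal_mul (by positivity)]
    apply ENNReal.ofReal_le_ofReal
    -- now a real inequality over finite sums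
    set Q : X → ℝ := fun x => ∑ y ∈ U, b x y * (f x - f y) ^ 2 with hQ
    have hQ0 : ∀ x, 0 ≤ Q x := fun x =>
      Finset.sum_nonneg (fun y _ => mul_nonneg (hb_nonneg x y) (sq_nonneg _))
    have step1 : ∀ x ∈ T, m x * graphLap b m f x ^ 2 ≤ D' * Q x := by
      intro x hx
      set S := ∑ y ∈ (hlf x).toFinset, b x y * (f x - f y) with hSdef
      have hCS : S ^ 2 ≤ (∑ y ∈ (hlf x).toFinset, b x y)
          * (∑ y ∈ (hlf x).toFinset, b x y * (f x - f y) ^ 2) := by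
        have := Finset.sum_mul_sq_le_sq_mul_sq (hlf x).toFinset
          (fun y => Real.sqrt (b x y)) (fun y => Real.sqrt (b x y) * (f x - f y))
        have e1 : ∀ y, Real.sqrt (b x y) * (Real.sqrt (b x y) * (f x - f y))
            = b x y * (f x - f y) := by
          intro y
          rw [← mul_assoc, Real.mul_self_sqrt (hb_nonneg x y)]
        have e2 : ∀ y, Real.sqrt (b x y) ^ 2 = b x y := fun y =>
          Real.sq_sqrt (hb_nonneg x y)
        have e3 : ∀ y, (Real.sqrt (b x y) * (f x - f y)) ^ 2
            = b x y * (f x - f y) ^ 2 := by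
          intro y
          rw [mul_pow, e2]
        simp only [e1, e2, e3] at this
        exact this
      have hdegle : ∑ y ∈ (hlf x).toFinset, b x y ≤ D' * m x := by
        rw [← hdeg_sum x]; exact hDeg x
      have hQle : ∑ y ∈ (hlf x).toFinset, b x y * (f x - f y) ^ 2 ≤ Q x := by
        apply Finset.sum_le_sum_of_subset_of_nonneg (hNU x hx)
        intro y _ _
        exact mul_nonneg (hb_nonneg x y) (sq_nonneg _)
      have hIn0 : 0 ≤ ∑ y ∈ (hlf x).toFinset, b x y * (f x - f y) ^ 2 :=
        Finset.sum_nonneg (fun y _ => mul_nonneg (hb_nonneg x y) (sq_nonneg _))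
      have hdeg0' : 0 ≤ ∑ y ∈ (hlf x).toFinset, b x y :=
        Finset.sum_nonneg (fun y _ => hb_nonneg x y)
      have hS2 : S ^ 2 ≤ (D' * m x) * Q x := by
        calc S ^ 2 ≤ (∑ y ∈ (hlf x).toFinset, b x y)
            * (∑ y ∈ (hlf x).toFinset, b x y * (f x - f y) ^ 2) := hCS
          _ ≤ (D' * m x) * Q x :=
            mul_le_mul hdegle hQle hIn0 (mul_nonneg hD'0 (hm_pos x).le)
      rw [hlapsum x, ← hSdef]
      have hm := hm_pos x
      have heq : m x * ((m x)⁻¹ * S) ^ 2 = S ^ 2 / m x := by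
        field_simp
      rw [heq, div_le_iff₀ hm]
      calc S ^ 2 ≤ (D' * m x) * Q x := hS2
        _ = D' * Q x * m x := by ring
    have step2 : ∑ x ∈ T, Q x ≤ 4 * D' * ∑ x ∈ T, m x * f x ^ 2 := by
      have hbnd : ∀ x ∈ T, Q x ≤ ∑ y ∈ U, b x y * (2 * f x ^ 2 + 2 * f y ^ 2) := by
        intro x _
        apply Finset.sum_le_sum
        intro y _
        apply mul_le_mul_of_nonneg_left _ (hb_nonneg x y)
        nlinarith [sq_nonneg (f x + f y)]
      calc ∑ x ∈ T, Q x
          ≤ ∑ x ∈ T, ∑ y ∈ U, b x y * (2 * f x ^ 2 + 2 * f y ^ 2) :=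
            Finset.sum_le_sum hbnd
        _ = (∑ x ∈ T, 2 * f x ^ 2 * ∑ y ∈ U, b x y)
            + ∑ x ∈ T, ∑ y ∈ U, 2 * b x y * f y ^ 2 := by
            rw [← Finset.sum_add_distrib]
            apply Finset.sum_congr rfl
            intro x _
            rw [Finset.mul_sum, ← Finset.sum_add_distrib]
            apply Finset.sum_congr rfl
            intro y _
            ring
        _ ≤ (∑ x ∈ T, 2 * f x ^ 2 * (D' * m x))
            + ∑ y ∈ U, 2 * (D' * m y) * f y ^ 2 := by
            apply add_le_add
            · apply Finset.sum_le_sum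
              intro x _
              apply mul_le_mul_of_nonneg_left _ (by positivity)
              calc ∑ y ∈ U, b x y ≤ graphDeg b x := by
                    apply Summable.sum_le_tsum U (fun y _ => hb_nonneg x y) (hsumm x)
                _ ≤ D' * m x := hDeg x
            · rw [Finset.sum_comm]
              apply Finset.sum_le_sum
              intro y _
              have h1 : ∑ x ∈ T, 2 * b x y * f y ^ 2
                  = 2 * (∑ x ∈ T, b y x) * f y ^ 2 := by
                rw [Finset.mul_sum, Finset.sum_mul]
                apply Finset.sum_congr rfl
                intro x _
                rw [hb_symm x y]
              rw [h1]
              have h2 : ∑ x ∈ T, b y x ≤ D' * m y := by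
                calc ∑ x ∈ T, b y x ≤ graphDeg b y :=
                      Summable.sum_le_tsum T (fun x _ => hb_nonneg y x) (hsumm y)
                  _ ≤ D' * m y := hDeg y
              nlinarith [sq_nonneg (f y)]
        _ = 2 * D' * (∑ x ∈ T, m x * f x ^ 2) + 2 * D' * ∑ y ∈ U, m y * f y ^ 2 := by
            rw [Finset.mul_sum, Finset.mul_sum]
            congr 1 <;> exact Finset.sum_congr rfl (fun x _ => by ring)
        _ = 4 * D' * ∑ x ∈ T, m x * f x ^ 2 := by
            have hUT : ∑ y ∈ U, m y * f y ^ 2 = ∑ y ∈ T, m y * f y ^ 2 := by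
              symm
              apply Finset.sum_subset hTU
              intro y _ hy
              rw [hf0 y (fun h => hy (hsT h))]
              ring
            rw [hUT]
            ring
    calc ∑ x ∈ T, m x * graphLap b m f x ^ 2
        ≤ ∑ x ∈ T, D' * Q x := Finset.sum_le_sum step1
      _ = D' * ∑ x ∈ T, Q x := by rw [Finset.mul_sum]
      _ ≤ D' * (4 * D' * ∑ x ∈ T, m x * f x ^ 2) :=
          mul_le_mul_of_nonneg_left step2 hD'0
      _ = 4 * D' ^ 2 * ∑ x ∈ T, m x * f x ^ 2 := by ring
end
end

section
/- (Bauer–Hua–Yau, bounded-Laplacian case) Let b be a connected locally finite graph over (X,m) with sup_x Deg(x) < ∞, and let ρ be an intrinsic pseudo-metric for b over (X,m) with jump size at most S for some S ∈ (0,∞). Then the heat kernel satisfies p_t(x,y) ≤ (1/√(m(x)·m(y))) · exp(−(t/S²)·ζ(ρ(x,y)·S / t)) for all x, y ∈ X and t > 0. -/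
open MeasureTheory

noncomputable section

/-!
Davies' method. For a bounded function `φ` that is `λ`-Lipschitz for `ρ`, the twisted operator
`e^{φ} Δ e^{-φ}` has quadratic form at least `-(cosh(λS) - 1)/S² ‖u‖²`: pairing the terms of
`(x, y)` and `(y, x)` produces `b(x,y) (f(x)² + f(y)² - 2 cosh(φ(x) - φ(y)) f(x) f(y))`, and
`cosh(φ(x) - φ(y)) - 1 ≤ (ρ(x,y)/S)² (cosh(λS) - 1)` on edges, which the intrinsic bound
`Σ_y b(x,y) ρ(x,y)² ≤ m(x)` sums against `‖u‖²`. Grönwall then bounds `e^{φ} e^{-tΔ} δ_y` by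
`e^{t(cosh(λS) - 1)/S²} e^{φ(y)} √m(y)`. With `φ = -λ min(ρ(x,·), ρ(x,y))` this gives
`p_t(x,y) √(m(x) m(y)) ≤ exp(-λ ρ(x,y) + t (cosh(λS) - 1)/S²)`, and the optimal
`λ = arsinh(ρ(x,y) S / t) / S` turns the exponent into `-(t/S²) ζ(ρ(x,y) S / t)`.
-/

open scoped ENNReal

lemma cosh_mul_sub_one_le {θ : ℝ} (hθ₀ : 0 ≤ θ) (hθ₁ : θ ≤ 1) (z : ℝ) :
    Real.cosh (θ * z) - 1 ≤ θ ^ 2 * (Real.cosh z - 1) := by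
  -- Compare the power series termwise: `(θ z)^{2n} ≤ θ² z^{2n}` for `n ≥ 1`.
  have hsum := ((Real.hasSum_cosh z).mul_left (θ ^ 2)).add (hasSum_ite_eq 0 (1 - θ ^ 2))
  have hle := hasSum_le (fun n => ?_) (Real.hasSum_cosh (θ * z)) hsum
  · linarith
  rcases Nat.eq_zero_or_pos n with rfl | hn
  · simp
  · rw [if_neg hn.ne', add_zero, mul_pow, pow_mul θ, ← mul_div_assoc]
    gcongr
    · exact (even_two_mul n).pow_nonneg z
    · exact pow_le_of_le_one (sq_nonneg θ) (pow_le_one₀ hθ₀ hθ₁) hn.ne'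

lemma twisted_pair_energy_ge {β s κ u v : ℝ} (hβ : 0 ≤ β) (hs : Real.cosh s - 1 ≤ κ) :
    -(κ * (β * u ^ 2 + β * v ^ 2)) ≤
      β * (u - Real.exp s * v) * u + β * (v - Real.exp (-s) * u) * v := by
  have hcosh : Real.exp s + Real.exp (-s) = 2 * Real.cosh s := by rw [Real.cosh_eq]; ring
  have h1 : 0 ≤ β * Real.cosh s * (u - v) ^ 2 := by
    have := Real.one_le_cosh s
    positivity
  have h2 : 0 ≤ β * (κ - (Real.cosh s - 1)) * (u ^ 2 + v ^ 2) :=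
    mul_nonneg (mul_nonneg hβ (by linarith)) (by positivity)
  linear_combination h1 + h2 + (β * u * v) * hcosh

lemma abs_twisted_term_le {β e K u v : ℝ} (hβ : 0 ≤ β) (he : 0 < e) (heK : e ≤ K)
    (hK : 1 ≤ K) : |β * (u - e * v) * u| ≤ 2 * K * (β * u ^ 2 + β * v ^ 2) := by
  rw [abs_mul, abs_mul, abs_of_nonneg hβ]
  have h1 : |u - e * v| ≤ |u| + K * |v| := by
    calc |u - e * v| ≤ |u| + e * |v| := by simpa [abs_mul, abs_of_pos he] using abs_sub u (e * v)
      _ ≤ |u| + K * |v| := by gcongr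
  have h2 : (|u| + K * |v|) * |u| ≤ 2 * K * (u ^ 2 + v ^ 2) := by
    nlinarith [sq_abs u, sq_abs v, sq_nonneg (|u| - |v|), abs_nonneg u, abs_nonneg v]
  calc β * |u - e * v| * |u| = β * (|u - e * v| * |u|) := by ring
    _ ≤ β * ((|u| + K * |v|) * |u|) := by gcongr
    _ ≤ β * (2 * K * (u ^ 2 + v ^ 2)) := by gcongr
    _ = 2 * K * (β * u ^ 2 + β * v ^ 2) := by ring

section KernelSums

variable {X : Type*} {w : X → X → ℝ} {g μ : X → ℝ} {C : ℝ}

lemma summable_kernel_mul_of_row_le (hw : ∀ x y, 0 ≤ w x y) (hrow : ∀ x, Summable (w x))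
    (hC : ∀ x, ∑' y, w x y ≤ C * μ x) (hg : ∀ x, 0 ≤ g x) (hμg : Summable fun x => μ x * g x) :
    Summable fun p : X × X => w p.1 p.2 * g p.1 := by
  refine (summable_prod_of_nonneg fun p => mul_nonneg (hw _ _) (hg _)).mpr
    ⟨fun x => (hrow x).mul_right (g x), ?_⟩
  refine (hμg.mul_left C).of_nonneg_of_le (fun x => tsum_nonneg fun y =>
    mul_nonneg (hw _ _) (hg _)) fun x => ?_
  dsimp only
  rw [tsum_mul_right, ← mul_assoc]
  exact mul_le_mul_of_nonneg_right (hC x) (hg x)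

lemma tsum_kernel_mul_le_of_row_le (hw : ∀ x y, 0 ≤ w x y) (hrow : ∀ x, Summable (w x))
    (hC : ∀ x, ∑' y, w x y ≤ C * μ x) (hg : ∀ x, 0 ≤ g x) (hμg : Summable fun x => μ x * g x) :
    ∑' p : X × X, w p.1 p.2 * g p.1 ≤ C * ∑' x, μ x * g x := by
  have hsum := summable_kernel_mul_of_row_le hw hrow hC hg hμg
  rw [hsum.tsum_prod, ← tsum_mul_left]
  refine Summable.tsum_le_tsum (fun x => ?_) hsum.prod (hμg.mul_left C)
  dsimp only
  rw [tsum_mul_right, ← mul_assoc]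
  exact mul_le_mul_of_nonneg_right (hC x) (hg x)

end KernelSums

structure IsLocallyFiniteGraph {X : Type*} (b : X → X → ℝ) (m : X → ℝ) : Prop where
  nonneg : ∀ x y, 0 ≤ b x y
  symm : ∀ x y, b x y = b y x
  finite_support : ∀ x, (Function.support (b x)).Finite
  weight_pos : ∀ x, 0 < m x

structure IsIntrinsicMetric {X : Type*} (b : X → X → ℝ) (m : X → ℝ) (ρ : X → X → ℝ) (S : ℝ) :
    Prop where
  nonneg : ∀ x y, 0 ≤ ρ x y
  symm : ∀ x y, ρ x y = ρ y x
  intrinsic : ∀ x, ∑' y, b x y * ρ x y ^ 2 ≤ m x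
  jump_le : ∀ x y, 0 < b x y → ρ x y ≤ S

section TwistedEnergy

variable {X : Type*} {b : X → X → ℝ} {m : X → ℝ} {ρ : X → X → ℝ} {S D lam : ℝ} {φ : X → ℝ}

lemma IsLocallyFiniteGraph.summable_mul (hG : IsLocallyFiniteGraph b m) (x : X) (g : X → ℝ) :
    Summable fun y => b x y * g y :=
  summable_of_hasFiniteSupport ((hG.finite_support x).subset
    (Function.support_mul_subset_left _ _))

lemma IsIntrinsicMetric.cosh_sub_one_le (hρ : IsIntrinsicMetric b m ρ S) (hS : 0 < S)
    (hφ : ∀ x y, |φ x - φ y| ≤ lam * ρ x y) {x y : X} (hxy : 0 < b x y) :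
    Real.cosh (φ x - φ y) - 1 ≤ (Real.cosh (lam * S) - 1) / S ^ 2 * ρ x y ^ 2 := by
  have hθ : 0 ≤ ρ x y / S := div_nonneg (hρ.nonneg x y) hS.le
  calc Real.cosh (φ x - φ y) - 1 ≤ Real.cosh (ρ x y / S * (lam * S)) - 1 := by
        rw [div_mul_comm, mul_div_cancel_right₀ _ hS.ne']
        exact sub_le_sub_right (Real.cosh_le_cosh.mpr ((hφ x y).trans (le_abs_self _))) 1
    _ ≤ (ρ x y / S) ^ 2 * (Real.cosh (lam * S) - 1) :=
        cosh_mul_sub_one_le hθ ((div_le_one hS).mpr (hρ.jump_le x y hxy)) _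
    _ = (Real.cosh (lam * S) - 1) / S ^ 2 * ρ x y ^ 2 := by ring

lemma summable_twisted_energy (hG : IsLocallyFiniteGraph b m)
    (hD : ∀ x, graphDeg b x / m x ≤ D) (hρ : IsIntrinsicMetric b m ρ S) (hlam : 0 ≤ lam)
    (hφ : ∀ x y, |φ x - φ y| ≤ lam * ρ x y) {f : X → ℝ}
    (hf : Summable fun x => m x * f x ^ 2) :
    Summable fun p : X × X => b p.1 p.2 * (f p.1 - Real.exp (φ p.1 - φ p.2) * f p.2) * f p.1 := by
  have hP : Summable fun p : X × X => b p.1 p.2 * f p.1 ^ 2 :=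
    summable_kernel_mul_of_row_le (g := fun x => f x ^ 2) hG.nonneg
      (fun x => by simpa using hG.summable_mul x 1)
      (fun x => (div_le_iff₀ (hG.weight_pos x)).mp (hD x)) (fun x => sq_nonneg _) hf
  have hP' : Summable fun p : X × X => b p.1 p.2 * f p.2 ^ 2 :=
    hP.prod_symm.congr fun p => by rw [hG.symm]; rfl
  refine Summable.of_norm_bounded ((hP.add hP').mul_left (2 * Real.exp (lam * S)))
    fun p => ?_
  rcases (hG.nonneg p.1 p.2).eq_or_lt with h0 | hpos
  · simp [← h0]
  have hK : lam * ρ p.1 p.2 ≤ lam * S := mul_le_mul_of_nonneg_left (hρ.jump_le _ _ hpos) hlam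
  exact abs_twisted_term_le hpos.le (Real.exp_pos _)
    (Real.exp_le_exp.mpr (((le_abs_self _).trans (hφ _ _)).trans hK))
    (Real.one_le_exp ((mul_nonneg hlam (hρ.nonneg _ _)).trans hK))

theorem twisted_energy_ge (hG : IsLocallyFiniteGraph b m) (hD : ∀ x, graphDeg b x / m x ≤ D)
    (hρ : IsIntrinsicMetric b m ρ S) (hS : 0 < S) (hlam : 0 ≤ lam)
    (hφ : ∀ x y, |φ x - φ y| ≤ lam * ρ x y) {f : X → ℝ}
    (hf : Summable fun x => m x * f x ^ 2) :
    -((Real.cosh (lam * S) - 1) / S ^ 2 * ∑' x, m x * f x ^ 2) ≤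
      ∑' x, (∑' y, b x y * (f x - Real.exp (φ x - φ y) * f y)) * f x := by
  set c := (Real.cosh (lam * S) - 1) / S ^ 2
  have hc : 0 ≤ c := div_nonneg (by linarith [Real.one_le_cosh (lam * S)]) (sq_nonneg S)
  set T : X × X → ℝ := fun p => b p.1 p.2 * (f p.1 - Real.exp (φ p.1 - φ p.2) * f p.2) * f p.1
  set N : X × X → ℝ := fun p => b p.1 p.2 * ρ p.1 p.2 ^ 2 * f p.1 ^ 2
  have hT : Summable T := summable_twisted_energy hG hD hρ hlam hφ hf
  have hw : ∀ x y, 0 ≤ b x y * ρ x y ^ 2 := fun x y => mul_nonneg (hG.nonneg x y) (sq_nonneg _)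
  have hrow : ∀ x, ∑' y, b x y * ρ x y ^ 2 ≤ 1 * m x := fun x => by simpa using hρ.intrinsic x
  have hN : Summable N := summable_kernel_mul_of_row_le (g := fun x => f x ^ 2) hw
    (fun x => hG.summable_mul x _) hrow (fun x => sq_nonneg _) hf
  have hN_le : ∑' p, N p ≤ 1 * ∑' x, m x * f x ^ 2 :=
    tsum_kernel_mul_le_of_row_le (g := fun x => f x ^ 2) hw (fun x => hG.summable_mul x _) hrow
      (fun x => sq_nonneg _) hf
  have hpair : ∀ p, -(c * (N p + N p.swap)) ≤ T p + T p.swap := by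
    rintro ⟨x, y⟩
    rcases (hG.nonneg x y).eq_or_lt with h0 | hpos
    · simp [T, N, ← h0, hG.symm y x]
    have := twisted_pair_energy_ge (u := f x) (v := f y) (hG.nonneg x y)
      (hρ.cosh_sub_one_le hS hφ hpos)
    simp only [T, N, Prod.swap, hG.symm y x, hρ.symm y x]
    rw [neg_sub] at this
    linarith
  have hswap : ∀ F : X × X → ℝ, ∑' p : X × X, F p.swap = ∑' p, F p :=
    (Equiv.prodComm X X).tsum_eq
  have hsumT : ∑' p, (T p + T p.swap) = 2 * ∑' p, T p := by
    rw [hT.tsum_add hT.prod_symm, hswap]; ring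
  have hsumN : ∑' p, -(c * (N p + N p.swap)) = -(2 * c * ∑' p, N p) := by
    rw [tsum_neg, tsum_mul_left, hN.tsum_add hN.prod_symm, hswap]; ring
  have hTN := Summable.tsum_le_tsum hpair ((hN.add hN.prod_symm).mul_left c).neg
    (hT.add hT.prod_symm)
  have hT_eq : ∑' p, T p = ∑' x, (∑' y, b x y * (f x - Real.exp (φ x - φ y) * f y)) * f x := by
    rw [hT.tsum_prod]
    exact tsum_congr fun x => by simp only [T]; exact tsum_mul_right
  nlinarith [mul_le_mul_of_nonneg_left hN_le hc]

end TwistedEnergy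

lemma exists_lipschitz_sub_eq_dist {X : Type*} {ρ : X → X → ℝ} (hρ_nonneg : ∀ x y, 0 ≤ ρ x y)
    (hρ_refl : ∀ x, ρ x x = 0) (hρ_symm : ∀ x y, ρ x y = ρ y x)
    (hρ_tri : ∀ x y z, ρ x z ≤ ρ x y + ρ y z) (x y : X) :
    ∃ ψ : X → ℝ, (∀ z, |ψ z| ≤ ρ x y) ∧ (∀ z w, |ψ z - ψ w| ≤ ρ z w) ∧ ψ y - ψ x = ρ x y := by
  refine ⟨fun z => min (ρ x z) (ρ x y), fun z => ?_, fun z w => ?_, ?_⟩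
  · rw [abs_of_nonneg (le_min (hρ_nonneg _ _) (hρ_nonneg _ _))]
    exact min_le_right _ _
  · refine (abs_min_sub_min_le_max _ _ _ _).trans ?_
    rw [sub_self, abs_zero, max_eq_left (abs_nonneg _), abs_sub_le_iff]
    constructor <;> linarith [hρ_tri x w z, hρ_tri x z w, hρ_symm z w]
  · simp [hρ_refl, hρ_nonneg]

lemma norm_le_exp_mul_of_inner_deriv_le {H : Type*} [NormedAddCommGroup H]
    [InnerProductSpace ℝ H] {v v' : ℝ → H} {c t : ℝ} (hv : ∀ s, HasDerivAt v (v' s) s)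
    (hc : ∀ s, inner ℝ (v' s) (v s) ≤ c * ‖v s‖ ^ 2) (ht : 0 ≤ t) :
    ‖v t‖ ≤ Real.exp (c * t) * ‖v 0‖ := by
  have hsq : ∀ s, HasDerivAt (‖v ·‖ ^ 2) (2 * inner ℝ (v s) (v' s)) s :=
    fun s => (hv s).norm_sq
  have hgron := le_gronwallBound_of_liminf_deriv_right_le (δ := ‖v 0‖ ^ 2) (K := 2 * c)
    (ε := 0) (a := 0) (b := t)
    (fun s _ => (hsq s).continuousAt.continuousWithinAt)
    (fun s _ r hr => by simpa [slope_def_field, div_eq_inv_mul] using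
      (hsq s).hasDerivWithinAt.liminf_right_slope_le hr)
    le_rfl (fun s _ => by rw [real_inner_comm]; linarith [hc s]) t ⟨ht, le_rfl⟩
  rw [gronwallBound_ε0, sub_zero, mul_assoc] at hgron
  refine (pow_le_pow_iff_left₀ (norm_nonneg _) (by positivity) two_ne_zero).mp ?_
  rw [mul_pow, ← Real.exp_nat_mul]
  push_cast
  linarith

section GraphL2

variable {X : Type*} [MeasurableSpace X] [MeasurableSingletonClass X] {m : X → ℝ}

lemma graphMeasure_ae_iff (hm : ∀ x, 0 < m x) {P : X → Prop} :
    (∀ᵐ x ∂graphMeasure m, P x) ↔ ∀ x, P x := by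
  refine ⟨fun h z => by_contra fun hz => ?_, Filter.Eventually.of_forall⟩
  have hnull : graphMeasure m {z} = 0 :=
    measure_mono_null (Set.singleton_subset_iff.mpr hz) (ae_iff.mp h)
  rw [graphMeasure_singleton, ENNReal.ofReal_eq_zero] at hnull
  exact (hm z).not_ge hnull

lemma hasSum_integral_graphMeasure (hm : ∀ x, 0 ≤ m x) {f : X → ℝ}
    (hf : Integrable f (graphMeasure m)) :
    HasSum (fun x => m x * f x) (∫ x, f x ∂graphMeasure m) := by
  have := hasSum_integral_measure hf
  simp only [integral_smul_measure, integral_dirac, ENNReal.toReal_ofReal (hm _),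
    smul_eq_mul] at this
  exact this

lemma hasSum_inner_graphMeasure (hm : ∀ x, 0 ≤ m x) (f g : Lp ℝ 2 (graphMeasure m)) :
    HasSum (fun x => m x * (f x * g x)) (inner ℝ f g) := by
  rw [L2.inner_def]
  convert hasSum_integral_graphMeasure hm (L2.integrable_inner (𝕜 := ℝ) f g) using 3 with x
  simp [mul_comm]

lemma norm_sq_eq_tsum_graphMeasure (hm : ∀ x, 0 ≤ m x) (f : Lp ℝ 2 (graphMeasure m)) :
    ‖f‖ ^ 2 = ∑' x, m x * f x ^ 2 := by
  simp_rw [← real_inner_self_eq_norm_sq, sq, (hasSum_inner_graphMeasure hm f f).tsum_eq]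

lemma deltaVert_apply (hm : ∀ x, 0 < m x) (z : X) :
    ⇑(deltaVert m z) = Set.indicator {z} 1 := by
  funext x
  exact (graphMeasure_ae_iff hm).mp indicatorConstLp_coeFn x

lemma inner_deltaVert_left (hm : ∀ x, 0 < m x) (z : X) (f : Lp ℝ 2 (graphMeasure m)) :
    inner ℝ (deltaVert m z) f = m z * f z := by
  refine (hasSum_inner_graphMeasure (fun x => (hm x).le) _ f).unique ?_
  convert hasSum_single z fun x hx => ?_ using 1
  · simp [deltaVert_apply hm]
  · simp [deltaVert_apply hm, hx]

lemma norm_deltaVert (hm : ∀ x, 0 < m x) (z : X) :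
    ‖deltaVert m z‖ = Real.sqrt (m z) := by
  rw [deltaVert, norm_indicatorConstLp two_ne_zero ENNReal.ofNat_ne_top, measureReal_def,
    graphMeasure_singleton, ENNReal.toReal_ofReal (hm z).le, Real.sqrt_eq_rpow]
  norm_num

lemma memLp_top_of_abs_le [Countable X] {w : X → ℝ} (C : ℝ) (hw : ∀ x, |w x| ≤ C) :
    MemLp w ∞ (graphMeasure m) :=
  memLp_top_of_bound (measurable_of_countable w).aestronglyMeasurable C (.of_forall hw)

def mulOp (m : X → ℝ) {w : X → ℝ} (hw : MemLp w ∞ (graphMeasure m)) :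
    Lp ℝ 2 (graphMeasure m) →L[ℝ] Lp ℝ 2 (graphMeasure m) :=
  (ContinuousLinearMap.mul ℝ ℝ).holderL (graphMeasure m) ∞ 2 2 hw.toLp

lemma mulOp_apply (hm : ∀ x, 0 < m x) {w : X → ℝ} (hw : MemLp w ∞ (graphMeasure m))
    (f : Lp ℝ 2 (graphMeasure m)) (x : X) : mulOp m hw f x = w x * f x := by
  have hw' := (graphMeasure_ae_iff hm).mp hw.coeFn_toLp
  have := (graphMeasure_ae_iff hm).mp
    ((ContinuousLinearMap.mul ℝ ℝ).coeFn_holder (r := 2) hw.toLp f) x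
  simpa [mulOp, hw'] using this

lemma mulOp_deltaVert (hm : ∀ x, 0 < m x) {w : X → ℝ} (hw : MemLp w ∞ (graphMeasure m))
    (z : X) : mulOp m hw (deltaVert m z) = w z • deltaVert m z := by
  refine Lp.ext ((graphMeasure_ae_iff hm).mpr fun x => ?_)
  rw [mulOp_apply hm, (graphMeasure_ae_iff hm).mp (Lp.coeFn_smul _ _) x, deltaVert_apply hm]
  by_cases hx : x = z <;> simp [hx]

lemma mulOp_inv_mulOp (hm : ∀ x, 0 < m x) {w : X → ℝ} (hw_ne : ∀ x, w x ≠ 0)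
    (hw : MemLp w ∞ (graphMeasure m)) (hw' : MemLp w⁻¹ ∞ (graphMeasure m))
    (g : Lp ℝ 2 (graphMeasure m)) : mulOp m hw' (mulOp m hw g) = g :=
  Lp.ext ((graphMeasure_ae_iff hm).mpr fun x => by
    rw [mulOp_apply hm, mulOp_apply hm, Pi.inv_apply, inv_mul_cancel_left₀ (hw_ne x)])

theorem inner_deltaVert_exp_le_of_conj (hm : ∀ x, 0 < m x)
    (Δ : Lp ℝ 2 (graphMeasure m) →L[ℝ] Lp ℝ 2 (graphMeasure m)) {w : X → ℝ}
    (hw_pos : ∀ x, 0 < w x) (hw : MemLp w ∞ (graphMeasure m))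
    (hw' : MemLp w⁻¹ ∞ (graphMeasure m)) {c : ℝ}
    (hc : ∀ g, -(c * ‖g‖ ^ 2) ≤ inner ℝ (mulOp m hw (Δ (mulOp m hw' g))) g)
    (x y : X) {t : ℝ} (ht : 0 ≤ t) :
    inner ℝ (deltaVert m x) (NormedSpace.exp (-(t • Δ)) (deltaVert m y)) ≤
      w y / w x * Real.exp (c * t) * (Real.sqrt (m x) * Real.sqrt (m y)) := by
  set E := fun s : ℝ => NormedSpace.exp (-(s • Δ))
  -- `v = w · e^{-sΔ} δ_y` solves `v' = -(w Δ w⁻¹) v`.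
  set v := fun s => mulOp m hw (E s (deltaVert m y))
  have hv : ∀ s, HasDerivAt v (-mulOp m hw (Δ (mulOp m hw' (v s)))) s := by
    intro s
    have hE : HasDerivAt E (-Δ * E s) s := by
      simpa only [E, ← smul_neg] using hasDerivAt_exp_smul_const' (-Δ) s
    refine ((mulOp m hw).hasFDerivAt.comp_hasDerivAt s
      (hE.clm_apply (hasDerivAt_const s (deltaVert m y)))).congr_deriv ?_
    simp [v, mulOp_inv_mulOp hm (fun x => (hw_pos x).ne') hw hw']
  have hgrowth := norm_le_exp_mul_of_inner_deriv_le (c := c) hv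
    (fun s => by rw [inner_neg_left]; linarith [hc (v s)]) ht
  have hv0 : ‖v 0‖ = w y * Real.sqrt (m y) := by
    simp [v, E, mulOp_deltaVert hm, norm_smul, norm_deltaVert hm, abs_of_pos (hw_pos y)]
  have hvt : inner ℝ (deltaVert m x) (E t (deltaVert m y)) =
      (w x)⁻¹ * inner ℝ (deltaVert m x) (v t) := by
    rw [inner_deltaVert_left hm, inner_deltaVert_left hm, mulOp_apply hm]
    field_simp [(hw_pos x).ne']
  calc inner ℝ (deltaVert m x) (E t (deltaVert m y))
      = (w x)⁻¹ * inner ℝ (deltaVert m x) (v t) := hvt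
    _ ≤ (w x)⁻¹ * (Real.sqrt (m x) * (Real.exp (c * t) * (w y * Real.sqrt (m y)))) := by
        refine mul_le_mul_of_nonneg_left ((real_inner_le_norm _ _).trans ?_)
          (inv_nonneg.mpr (hw_pos x).le)
        rw [norm_deltaVert hm, ← hv0]
        gcongr
    _ = w y / w x * Real.exp (c * t) * (Real.sqrt (m x) * Real.sqrt (m y)) := by ring

end GraphL2

section Laplacian

variable {X : Type*} [MeasurableSpace X] [MeasurableSingletonClass X]
  {b : X → X → ℝ} {m : X → ℝ} {ρ : X → X → ℝ} {S D lam : ℝ} {φ : X → ℝ}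
  {Δ : Lp ℝ 2 (graphMeasure m) →L[ℝ] Lp ℝ 2 (graphMeasure m)}

lemma mulOp_conj_laplacian_apply (hm : ∀ x, 0 < m x)
    (hΔ : ∀ u : Lp ℝ 2 (graphMeasure m), ∀ x : X,
      (Δ u : X → ℝ) x = (m x)⁻¹ * ∑' y, b x y * ((u : X → ℝ) x - (u : X → ℝ) y))
    (hw : MemLp (fun x => Real.exp (φ x)) ∞ (graphMeasure m))
    (hw' : MemLp (fun x => Real.exp (φ x))⁻¹ ∞ (graphMeasure m))
    (g : Lp ℝ 2 (graphMeasure m)) (x : X) :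
    mulOp m hw (Δ (mulOp m hw' g)) x =
      (m x)⁻¹ * ∑' y, b x y * (g x - Real.exp (φ x - φ y) * g y) := by
  simp only [mulOp_apply hm, hΔ, Pi.inv_apply, mul_left_comm (Real.exp (φ x)),
    ← tsum_mul_left, Real.exp_sub]
  congr 2 with y
  field_simp

theorem inner_conj_laplacian_ge (hG : IsLocallyFiniteGraph b m)
    (hD : ∀ x, graphDeg b x / m x ≤ D) (hρ : IsIntrinsicMetric b m ρ S) (hS : 0 < S)
    (hlam : 0 ≤ lam) (hφ : ∀ x y, |φ x - φ y| ≤ lam * ρ x y)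
    (hΔ : ∀ u : Lp ℝ 2 (graphMeasure m), ∀ x : X,
      (Δ u : X → ℝ) x = (m x)⁻¹ * ∑' y, b x y * ((u : X → ℝ) x - (u : X → ℝ) y))
    (hw : MemLp (fun x => Real.exp (φ x)) ∞ (graphMeasure m))
    (hw' : MemLp (fun x => Real.exp (φ x))⁻¹ ∞ (graphMeasure m))
    (g : Lp ℝ 2 (graphMeasure m)) :
    -((Real.cosh (lam * S) - 1) / S ^ 2 * ‖g‖ ^ 2) ≤
      inner ℝ (mulOp m hw (Δ (mulOp m hw' g))) g := by
  have hm : ∀ x, 0 ≤ m x := fun x => (hG.weight_pos x).le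
  have hg : Summable fun x => m x * g x ^ 2 := by
    simpa only [sq] using (hasSum_inner_graphMeasure hm g g).summable
  rw [norm_sq_eq_tsum_graphMeasure hm, ← (hasSum_inner_graphMeasure hm _ g).tsum_eq]
  refine (twisted_energy_ge hG hD hρ hS hlam hφ hg).trans_eq (tsum_congr fun x => ?_)
  rw [mulOp_conj_laplacian_apply hG.weight_pos hΔ, ← mul_assoc,
    mul_inv_cancel_left₀ (hG.weight_pos x).ne']

theorem inner_deltaVert_heat_le [Countable X] (hG : IsLocallyFiniteGraph b m)
    (hD : ∀ x, graphDeg b x / m x ≤ D) (hρ : IsIntrinsicMetric b m ρ S) (hS : 0 < S)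
    (hΔ : ∀ u : Lp ℝ 2 (graphMeasure m), ∀ x : X,
      (Δ u : X → ℝ) x = (m x)⁻¹ * ∑' y, b x y * ((u : X → ℝ) x - (u : X → ℝ) y))
    {ψ : X → ℝ} {C : ℝ} (hψ_bdd : ∀ z, |ψ z| ≤ C) (hψ_lip : ∀ z w, |ψ z - ψ w| ≤ ρ z w)
    (hlam : 0 ≤ lam) (x y : X) {t : ℝ} (ht : 0 ≤ t) :
    inner ℝ (deltaVert m x) (NormedSpace.exp (-(t • Δ)) (deltaVert m y)) ≤
      Real.exp (-(lam * (ψ y - ψ x)) + (Real.cosh (lam * S) - 1) / S ^ 2 * t) *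
        (Real.sqrt (m x) * Real.sqrt (m y)) := by
  set φ := fun z => -(lam * ψ z)
  have hφ_bdd : ∀ z, |φ z| ≤ lam * C := fun z => by
    simpa [φ, abs_mul, abs_of_nonneg hlam] using mul_le_mul_of_nonneg_left (hψ_bdd z) hlam
  have hφ_lip : ∀ z w, |φ z - φ w| ≤ lam * ρ z w := fun z w => by
    rw [show φ z - φ w = -(lam * (ψ z - ψ w)) by ring, abs_neg, abs_mul, abs_of_nonneg hlam]
    exact mul_le_mul_of_nonneg_left (hψ_lip z w) hlam
  have hw : MemLp (fun z => Real.exp (φ z)) ∞ (graphMeasure m) :=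
    memLp_top_of_abs_le _ fun z => by
      rw [abs_of_pos (Real.exp_pos _)]
      exact Real.exp_le_exp.mpr ((le_abs_self _).trans (hφ_bdd z))
  have hw' : MemLp (fun z => Real.exp (φ z))⁻¹ ∞ (graphMeasure m) :=
    memLp_top_of_abs_le _ fun z => by
      rw [Pi.inv_apply, ← Real.exp_neg, abs_of_pos (Real.exp_pos _)]
      exact Real.exp_le_exp.mpr ((neg_le_abs _).trans (hφ_bdd z))
  refine (inner_deltaVert_exp_le_of_conj hG.weight_pos Δ (fun z => Real.exp_pos (φ z)) hw hw'
    (inner_conj_laplacian_ge hG hD hρ hS hlam hφ_lip hΔ hw hw') x y ht).trans_eq ?_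
  rw [← Real.exp_sub, ← Real.exp_add]
  congr 2
  ring

end Laplacian

lemma neg_mul_add_cosh_arsinh_eq_zeta {R S t : ℝ} (hS : S ≠ 0) (ht : t ≠ 0) :
    -(Real.arsinh (R * S / t) / S * R) +
        (Real.cosh (Real.arsinh (R * S / t) / S * S) - 1) / S ^ 2 * t =
      -(t / S ^ 2 * zeta (R * S / t)) := by
  rw [div_mul_cancel₀ _ hS, Real.cosh_arsinh, zeta, add_comm 1 ((R * S / t) ^ 2)]
  field_simp
  ring

theorem stmt8_general {X : Type*} [Countable X] [MeasurableSpace X] [MeasurableSingletonClass X]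
    (b : X → X → ℝ) (m : X → ℝ)
    (hb_nonneg : ∀ x y, 0 ≤ b x y) (hb_symm : ∀ x y, b x y = b y x)
    (hlf : ∀ x, (Function.support (b x)).Finite)
    (hm_pos : ∀ x, 0 < m x)
    -- the weighted vertex degree `Deg = deg/m` is bounded
    (hDeg_bdd : ∃ D : ℝ, ∀ x, graphDeg b x / m x ≤ D)
    -- `ρ` is an intrinsic pseudo-metric with jump size at most `S ∈ (0,∞)`
    (S : ℝ) (hS : 0 < S)
    (ρ : X → X → ℝ)
    (hρ_refl : ∀ x, ρ x x = 0) (hρ_symm : ∀ x y, ρ x y = ρ y x)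
    (hρ_tri : ∀ x y z, ρ x z ≤ ρ x y + ρ y z)
    (hρ_intrinsic : ∀ x, ∑' y, b x y * ρ x y ^ 2 ≤ m x)
    (hρ_jump : ∀ x y, 0 < b x y → ρ x y ≤ S)
    -- the Laplacian, a bounded self-adjoint operator on `ℓ²(X,m)`
    (Δ : Lp ℝ 2 (graphMeasure m) →L[ℝ] Lp ℝ 2 (graphMeasure m))
    (hΔ : ∀ u : Lp ℝ 2 (graphMeasure m), ∀ x : X,
      (Δ u : X → ℝ) x = (m x)⁻¹ * ∑' y, b x y * ((u : X → ℝ) x - (u : X → ℝ) y))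
    -- the heat kernel `p_t(x,y) = ⟨δ_x, e^{−tΔ} δ_y⟩ / (m(x)·m(y))`
    (p : ℝ → X → X → ℝ)
    (hp : ∀ t x y, p t x y =
      (inner ℝ (deltaVert m x) (NormedSpace.exp (-(t • Δ)) (deltaVert m y)) : ℝ) /
        (m x * m y)) :
    ∀ (x y : X) (t : ℝ), 0 < t →
      p t x y ≤ (Real.sqrt (m x * m y))⁻¹ *
        Real.exp (-(t / S ^ 2 * zeta (ρ x y * S / t))) := by
  intro x y t ht
  obtain ⟨D, hD⟩ := hDeg_bdd
  have hρ_nonneg : ∀ x y, 0 ≤ ρ x y := fun x y => by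
    linarith [hρ_tri x y x, hρ_refl x, hρ_symm y x]
  obtain ⟨ψ, hψ_bdd, hψ_lip, hψxy⟩ :=
    exists_lipschitz_sub_eq_dist hρ_nonneg hρ_refl hρ_symm hρ_tri x y
  have hbound := inner_deltaVert_heat_le ⟨hb_nonneg, hb_symm, hlf, hm_pos⟩ hD
    ⟨hρ_nonneg, hρ_symm, hρ_intrinsic, hρ_jump⟩ hS hΔ hψ_bdd hψ_lip
    (lam := Real.arsinh (ρ x y * S / t) / S)
    (div_nonneg (Real.arsinh_nonneg_iff.mpr (by positivity [hρ_nonneg x y])) hS.le) x y ht.le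
  rw [hψxy, neg_mul_add_cosh_arsinh_eq_zeta hS.ne' ht.ne'] at hbound
  have hmx := hm_pos x
  have hmy := hm_pos y
  rw [hp, div_le_iff₀ (by positivity), Real.sqrt_mul hmx.le]
  refine hbound.trans_eq ?_
  field_simp
  rw [Real.sq_sqrt hmx.le, Real.sq_sqrt hmy.le]

theorem stmt8 {X : Type*} [Countable X] [MeasurableSpace X] [MeasurableSingletonClass X]
    (b : X → X → ℝ) (m : X → ℝ)
    (hb_nonneg : ∀ x y, 0 ≤ b x y) (hb_symm : ∀ x y, b x y = b y x)
    (hb_loop : ∀ x, b x x = 0)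
    (hlf : ∀ x, (Function.support (b x)).Finite)
    (hm_pos : ∀ x, 0 < m x)
    (hconn : ∀ x y, Relation.ReflTransGen (fun u v => 0 < b u v) x y)
    -- the weighted vertex degree `Deg = deg/m` is bounded
    (hDeg_bdd : ∃ D : ℝ, ∀ x, graphDeg b x / m x ≤ D)
    -- `ρ` is an intrinsic pseudo-metric with jump size at most `S ∈ (0,∞)`
    (S : ℝ) (hS : 0 < S)
    (ρ : X → X → ℝ)
    (hρ_refl : ∀ x, ρ x x = 0) (hρ_symm : ∀ x y, ρ x y = ρ y x)
    (hρ_tri : ∀ x y z, ρ x z ≤ ρ x y + ρ y z)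
    (hρ_intrinsic : ∀ x, ∑' y, b x y * ρ x y ^ 2 ≤ m x)
    (hρ_jump : ∀ x y, 0 < b x y → ρ x y ≤ S)
    -- the Laplacian, a bounded self-adjoint operator on `ℓ²(X,m)`
    (Δ : Lp ℝ 2 (graphMeasure m) →L[ℝ] Lp ℝ 2 (graphMeasure m))
    (hΔ : ∀ u : Lp ℝ 2 (graphMeasure m), ∀ x : X,
      (Δ u : X → ℝ) x = (m x)⁻¹ * ∑' y, b x y * ((u : X → ℝ) x - (u : X → ℝ) y))
    (hΔ_sa : IsSelfAdjoint Δ)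
    -- the heat kernel `p_t(x,y) = ⟨δ_x, e^{−tΔ} δ_y⟩ / (m(x)·m(y))`
    (p : ℝ → X → X → ℝ)
    (hp : ∀ t x y, p t x y =
      (inner ℝ (deltaVert m x) (NormedSpace.exp (-(t • Δ)) (deltaVert m y)) : ℝ) /
        (m x * m y)) :
    ∀ (x y : X) (t : ℝ), 0 < t →
      p t x y ≤ (Real.sqrt (m x * m y))⁻¹ *
        Real.exp (-(t / S ^ 2 * zeta (ρ x y * S / t))) :=
  stmt8_general b m hb_nonneg hb_symm hlf hm_pos hDeg_bdd S hS ρ hρ_refl hρ_symm hρ_tri hρ_intrinsic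
    hρ_jump Δ hΔ p hp

end
end

section
/- For every S > 0 and every γ > 0, the infimum over λ > 0 of the quantity −γλ + (2/S²)·(cosh(λS) − 1) equals −(2/S²)·ζ(γS/2), and this infimum is attained at λ = arsinh(γS/2)/S. -/
/-! The substitution `t = λS`, `x = γS/2` turns the objective into `-(2/S²)·(x t - (cosh t - 1))`,
and `ζ` is the convex conjugate of `cosh - 1`: by convexity, `x t - cosh t` is maximal where
`sinh t = x`, i.e. at `t = arsinh x`, where `cosh t = √(x² + 1)`. -/

noncomputable section

open Real

theorem cosh_add_sinh_mul_sub_le_cosh (a b : ℝ) : cosh a + sinh a * (b - a) ≤ cosh b := by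
  have hb : exp b = exp a * exp (b - a) := by rw [← exp_add]; ring_nf
  have hb' : exp (-b) = exp (-a) * exp (a - b) := by rw [← exp_add]; ring_nf
  have h₁ := mul_le_mul_of_nonneg_left (add_one_le_exp (b - a)) (exp_pos a).le
  have h₂ := mul_le_mul_of_nonneg_left (add_one_le_exp (a - b)) (exp_pos (-a)).le
  rw [cosh_eq, cosh_eq, sinh_eq, hb, hb']
  linarith

theorem zeta_eq_mul_arsinh_sub_cosh_arsinh (x : ℝ) :
    zeta x = x * arsinh x - (cosh (arsinh x) - 1) := by
  rw [zeta, cosh_arsinh, add_comm 1 (x ^ 2)]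
  ring

theorem mul_sub_cosh_sub_one_le_zeta (x t : ℝ) : x * t - (cosh t - 1) ≤ zeta x := by
  have := cosh_add_sinh_mul_sub_le_cosh (arsinh x) t
  rw [sinh_arsinh] at this
  rw [zeta_eq_mul_arsinh_sub_cosh_arsinh]
  linarith

theorem neg_mul_add_cosh_sub_one_eq {S : ℝ} (hS : S ≠ 0) (γ l : ℝ) :
    -(γ * l) + 2 / S ^ 2 * (cosh (l * S) - 1) =
      -(2 / S ^ 2 * (γ * S / 2 * (l * S) - (cosh (l * S) - 1))) := by
  field_simp
  ring

theorem stmt9 (S γ : ℝ) (hS : 0 < S) (hγ : 0 < γ) :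
    IsLeast {v : ℝ | ∃ l : ℝ, 0 < l ∧ v = -(γ * l) + 2 / S ^ 2 * (Real.cosh (l * S) - 1)}
      (-(2 / S ^ 2 * zeta (γ * S / 2))) ∧
    -(γ * (Real.arsinh (γ * S / 2) / S)) +
        2 / S ^ 2 * (Real.cosh ((Real.arsinh (γ * S / 2) / S) * S) - 1) =
      -(2 / S ^ 2 * zeta (γ * S / 2)) := by
  have hattained : -(γ * (arsinh (γ * S / 2) / S)) +
      2 / S ^ 2 * (cosh ((arsinh (γ * S / 2) / S) * S) - 1) = -(2 / S ^ 2 * zeta (γ * S / 2)) := by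
    rw [neg_mul_add_cosh_sub_one_eq hS.ne', div_mul_cancel₀ _ hS.ne',
      zeta_eq_mul_arsinh_sub_cosh_arsinh]
  have hpos : 0 < arsinh (γ * S / 2) / S := div_pos (arsinh_pos_iff.2 (by positivity)) hS
  refine ⟨⟨⟨_, hpos, hattained.symm⟩, ?_⟩, hattained⟩
  rintro _ ⟨l, -, rfl⟩
  rw [neg_mul_add_cosh_sub_one_eq hS.ne']
  exact neg_le_neg (mul_le_mul_of_nonneg_left (mul_sub_cosh_sub_one_le_zeta _ _) (by positivity))
end
end
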